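/- arXiv:1710.09614 — 7 statements merged into one kernel-verified Lean document; each statement's English description precedes it below -/
import Mathlib

section
/- Let X and Y be Hilbert spaces and T : X → Y a bounded linear operator. Suppose that for every ε > 0 there exist a Banach space Z_ε, a compact linear operator S_ε : X → Z_ε, and a constant C_ε > 0 such that ‖Tx‖_Y ≤ ε‖x‖_X + C_ε‖S_ε x‖_{Z_ε} for all x ∈ X. Then T is compact. -/
/-- A compact factorization datum: a Banach space `Z` together with a compact
continuous linear operator `S : X → Z`. -/
structure CompactFactor (X : Type*) [NormedAddCommGroup X] [NormedSpace ℂ X] where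
  Z : Type
  [instN : NormedAddCommGroup Z]
  [instM : NormedSpace ℂ Z]
  [instC : CompleteSpace Z]
  S : X →L[ℂ] Z
  compact : IsCompactOperator S

attribute [instance] CompactFactor.instN CompactFactor.instM CompactFactor.instC

/-!
On the unit ball, `‖T x‖ ≤ ε ‖x‖ + C ‖S x‖` gives `dist (T x) (T y) ≤ 2ε + C dist (S x) (S y)`.
A finite `η`-net of the totally bounded set `S '' ball 0 1`, with `C η` small, therefore pulls
back to a finite net of radius barely above `2ε` for `T '' ball 0 1`. So `T '' ball 0 1` is
totally bounded, and its closure is compact because `Y` is complete.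
-/

open Metric

theorem exists_finite_cover_image_of_dist_le_add {α β γ : Type*} [PseudoMetricSpace α]
    [PseudoMetricSpace β] [PseudoMetricSpace γ] {f : α → β} {g : α → γ} {s : Set α}
    (hg : TotallyBounded (g '' s)) {ε C δ : ℝ} (hC : 0 ≤ C) (hεδ : ε < δ)
    (hfg : ∀ x ∈ s, ∀ y ∈ s, dist (f x) (f y) ≤ ε + C * dist (g x) (g y)) :
    ∃ t : Set β, t.Finite ∧ f '' s ⊆ ⋃ y ∈ t, ball y δ := by
  set η := (δ - ε) / (C + 1)
  have hη : 0 < η := div_pos (sub_pos.2 hεδ) (by linarith)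
  have hCη : C * η < δ - ε := by
    calc C * η < (C + 1) * η := by gcongr; linarith
      _ = δ - ε := mul_div_cancel₀ _ (by linarith)
  obtain ⟨u, hus, huf, hcov⟩ :=
    Set.exists_subset_image_finite_and.1 (finite_approx_of_totallyBounded hg η hη)
  refine ⟨f '' u, huf.image f, ?_⟩
  rintro _ ⟨x, hx, rfl⟩
  obtain ⟨y, hyu, hxy⟩ : ∃ y ∈ u, dist (g x) (g y) < η := by
    simpa [Set.biUnion_image] using hcov ⟨x, hx, rfl⟩
  refine Set.mem_biUnion (Set.mem_image_of_mem f hyu) (mem_ball.2 ?_)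
  calc dist (f x) (f y) ≤ ε + C * dist (g x) (g y) := hfg x hx y (hus hyu)
    _ ≤ ε + C * η := by gcongr
    _ < δ := by linarith

theorem dist_map_le_of_norm_map_le_add {E F G 𝓕 𝓖 : Type*} [SeminormedAddCommGroup E]
    [SeminormedAddCommGroup F] [SeminormedAddCommGroup G] [FunLike 𝓕 E F] [AddMonoidHomClass 𝓕 E F]
    [FunLike 𝓖 E G] [AddMonoidHomClass 𝓖 E G] {T : 𝓕} {S : 𝓖} {ε C : ℝ}
    (h : ∀ x, ‖T x‖ ≤ ε * ‖x‖ + C * ‖S x‖) (x y : E) :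
    dist (T x) (T y) ≤ ε * dist x y + C * dist (S x) (S y) := by
  simpa only [dist_eq_norm, map_sub] using h (x - y)

theorem stmt0_general {X Y : Type*} [NormedAddCommGroup X] [InnerProductSpace ℂ X]
    [NormedAddCommGroup Y] [InnerProductSpace ℂ Y] [CompleteSpace Y]
    (T : X →L[ℂ] Y)
    (h : ∀ ε : ℝ, 0 < ε → ∃ (F : CompactFactor X) (C : ℝ), 0 < C ∧
      ∀ x : X, ‖T x‖ ≤ ε * ‖x‖ + C * ‖F.S x‖) :
    IsCompactOperator T := by
  refine (isCompactOperator_iff_exists_mem_nhds_isCompact_closure_image T).2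
    ⟨ball 0 1, ball_mem_nhds 0 one_pos, ?_⟩
  refine (totallyBounded_iff.2 fun δ hδ => ?_).closure.isCompact_of_isClosed isClosed_closure
  obtain ⟨F, C, hC, hTS⟩ := h (δ / 4) (by positivity)
  have hS : TotallyBounded (F.S '' ball 0 1) :=
    (F.compact.isCompact_closure_image_ball 1).totallyBounded.subset subset_closure
  refine exists_finite_cover_image_of_dist_le_add hS hC.le (by linarith : δ / 2 < δ) ?_
  intro x hx y hy
  have hxy : dist x y ≤ 2 := by
    linarith [dist_triangle_right x y 0, mem_ball.1 hx, mem_ball.1 hy]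
  calc dist (T x) (T y) ≤ δ / 4 * dist x y + C * dist (F.S x) (F.S y) :=
        dist_map_le_of_norm_map_le_add hTS x y
    _ ≤ δ / 2 + C * dist (F.S x) (F.S y) := by nlinarith

theorem stmt0 {X Y : Type*} [NormedAddCommGroup X] [InnerProductSpace ℂ X] [CompleteSpace X]
    [NormedAddCommGroup Y] [InnerProductSpace ℂ Y] [CompleteSpace Y]
    (T : X →L[ℂ] Y)
    (h : ∀ ε : ℝ, 0 < ε → ∃ (F : CompactFactor X) (C : ℝ), 0 < C ∧
      ∀ x : X, ‖T x‖ ≤ ε * ‖x‖ + C * ‖F.S x‖) :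
    IsCompactOperator T :=
  stmt0_general T h
end

section
/- Let A be an n × n Hermitian matrix and 1 ≤ q ≤ n. The following are equivalent: (i) the sum of any q eigenvalues of A is at least M; (ii) for every collection of q orthonormal vectors e¹, …, e^q in ℂⁿ, ∑_{s=1}^{q} ⟨A e^s, e^s⟩ ≥ M. -/
/-!
Expand each `e s` in an orthonormal eigenbasis `b` of `A`: then
`∑ s ⟨A e s, e s⟩ = ∑ k λ_k u_k` with `u_k = ∑ s |⟨b k, e s⟩|²`. By Bessel's inequality
`0 ≤ u_k ≤ 1`, and by Parseval `∑ k u_k = q`. If `S` is a `q`-set minimising `∑_{k ∈ S} λ_k`,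
exchanging one index shows that a threshold `μ` separates `λ` on `S` from `λ` off `S`; moving
weight from below `μ` to above it then gives `∑_{k ∈ S} λ_k ≤ ∑ k λ_k u_k`, so (i) implies (ii).
Conversely, `q` distinct eigenvectors form an orthonormal family whose Rayleigh quotients are
the corresponding eigenvalues.
-/

open Finset

section Weights

variable {ι : Type*} {g u : ι → ℝ}

lemma Finset.exists_forall_le_forall_ge_of_forall_le [Finite ι] (S : Finset ι)
    (h : ∀ i ∈ S, ∀ j ∉ S, g i ≤ g j) :
    ∃ μ, (∀ i ∈ S, g i ≤ μ) ∧ ∀ j ∉ S, μ ≤ g j := by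
  rcases S.eq_empty_or_nonempty with rfl | hS
  · obtain ⟨μ, hμ⟩ := (Set.finite_range g).bddBelow
    exact ⟨μ, by simp, fun j _ => hμ ⟨j, rfl⟩⟩
  · obtain ⟨i₀, hi₀, hmax⟩ := S.exists_max_image g hS
    exact ⟨g i₀, hmax, fun j hj => h i₀ hi₀ j hj⟩

lemma Finset.sum_le_sum_mul_of_forall_le [Fintype ι] [DecidableEq ι] (S : Finset ι)
    (h : ∀ i ∈ S, ∀ j ∉ S, g i ≤ g j) (hu0 : ∀ i, 0 ≤ u i) (hu1 : ∀ i, u i ≤ 1)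
    (hu : ∑ i, u i = #S) :
    ∑ i ∈ S, g i ≤ ∑ i, g i * u i := by
  obtain ⟨μ, hμS, hμSc⟩ := S.exists_forall_le_forall_ge_of_forall_le h
  have hin : ∑ i ∈ S, g i * (1 - u i) ≤ ∑ i ∈ S, μ * (1 - u i) :=
    sum_le_sum fun i hi => mul_le_mul_of_nonneg_right (hμS i hi) (sub_nonneg.2 (hu1 i))
  have hout : ∑ j ∈ Sᶜ, μ * u j ≤ ∑ j ∈ Sᶜ, g j * u j :=
    sum_le_sum fun j hj => mul_le_mul_of_nonneg_right (hμSc j (mem_compl.1 hj)) (hu0 j)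
  have hbal : ∑ i ∈ S, μ * (1 - u i) = ∑ j ∈ Sᶜ, μ * u j := by
    rw [← mul_sum, ← mul_sum, sum_sub_distrib, sum_const, nsmul_one, ← hu,
      ← sum_add_sum_compl S u]
    ring
  calc ∑ i ∈ S, g i = ∑ i ∈ S, g i * u i + ∑ i ∈ S, g i * (1 - u i) := by
        rw [← sum_add_distrib]
        simp only [mul_sub, mul_one, add_sub_cancel]
    _ ≤ ∑ i ∈ S, g i * u i + ∑ j ∈ Sᶜ, g j * u j := by linarith
    _ = ∑ i, g i * u i := sum_add_sum_compl S _

lemma Finset.le_of_forall_sum_le_sum [DecidableEq ι] (S : Finset ι)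
    (hS : ∀ T : Finset ι, #T = #S → ∑ i ∈ S, g i ≤ ∑ i ∈ T, g i) :
    ∀ i ∈ S, ∀ j ∉ S, g i ≤ g j := by
  intro i hi j hj
  have hj' : j ∉ S.erase i := fun h => hj (mem_of_mem_erase h)
  have hmin := hS (insert j (S.erase i)) (by
    rw [card_insert_of_notMem hj', card_erase_add_one hi])
  rw [sum_insert hj', ← add_sum_erase S g hi] at hmin
  linarith

lemma Finset.exists_card_eq_sum_le_sum_mul [Fintype ι] [DecidableEq ι] (g : ι → ℝ)
    (hu0 : ∀ i, 0 ≤ u i) (hu1 : ∀ i, u i ≤ 1) {q : ℕ} (hu : ∑ i, u i = q) :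
    ∃ S : Finset ι, #S = q ∧ ∑ i ∈ S, g i ≤ ∑ i, g i * u i := by
  have hq : (q : ℝ) ≤ #(univ : Finset ι) := by
    rw [← hu, card_eq_sum_ones, Nat.cast_sum, Nat.cast_one]
    exact sum_le_sum fun i _ => hu1 i
  obtain ⟨S, hSq, hmin⟩ := (univ.powersetCard q).exists_min_image (fun T => ∑ i ∈ T, g i)
    (powersetCard_nonempty.2 (by exact_mod_cast hq))
  have hcard : #S = q := (mem_powersetCard.1 hSq).2
  refine ⟨S, hcard, S.sum_le_sum_mul_of_forall_le ?_ hu0 hu1 (hcard ▸ hu)⟩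
  refine S.le_of_forall_sum_le_sum fun T hT => hmin T ?_
  rw [mem_powersetCard, hT, hcard]
  exact ⟨subset_univ T, rfl⟩

end Weights

section Spectral

variable {𝕜 : Type*} [RCLike 𝕜]

lemma OrthonormalBasis.re_inner_map_self {E ι : Type*} [NormedAddCommGroup E]
    [InnerProductSpace 𝕜 E] [Fintype ι] (b : OrthonormalBasis ι 𝕜 E) {T : E →ₗ[𝕜] E}
    {μ : ι → ℝ} (hT : ∀ i, T (b i) = (μ i : 𝕜) • b i) (x : E) :
    RCLike.re (inner 𝕜 x (T x)) = ∑ i, μ i * ‖inner 𝕜 (b i) x‖ ^ 2 := by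
  have hTx : T x = ∑ i, (inner 𝕜 (b i) x * μ i) • b i := by
    conv_lhs => rw [← b.sum_repr' x]
    simp only [map_sum, map_smul, hT, smul_smul]
  rw [hTx, inner_sum, map_sum]
  refine sum_congr rfl fun i _ => ?_
  rw [inner_smul_right, ← inner_conj_symm x, mul_right_comm, RCLike.mul_conj,
    ← RCLike.ofReal_pow, ← RCLike.ofReal_mul, RCLike.ofReal_re, mul_comm]

namespace Matrix

variable {n : Type*} [Fintype n] [DecidableEq n]

lemma sum_conj_mul_mul_eq_inner_toEuclideanLin (A : Matrix n n 𝕜) (x : EuclideanSpace 𝕜 n) :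
    ∑ i, ∑ j, starRingEnd 𝕜 (x i) * A i j * x j = inner 𝕜 x (toEuclideanLin A x) := by
  simp only [EuclideanSpace.inner_eq_star_dotProduct, toLpLin_apply, dotProduct, mulVec,
    sum_mul, Pi.star_apply, RCLike.star_def]
  exact sum_congr rfl fun i _ => sum_congr rfl fun j _ => by ring

lemma IsHermitian.toEuclideanLin_eigenvectorBasis {A : Matrix n n 𝕜} (hA : A.IsHermitian)
    (k : n) :
    toEuclideanLin A (hA.eigenvectorBasis k) = (hA.eigenvalues k : 𝕜) • hA.eigenvectorBasis k := by
  rw [toLpLin_apply, hA.mulVec_eigenvectorBasis, RCLike.real_smul_eq_coe_smul (K := 𝕜)]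
  rfl

lemma IsHermitian.re_sum_conj_mul_mul_eq {A : Matrix n n 𝕜} (hA : A.IsHermitian)
    (x : EuclideanSpace 𝕜 n) :
    RCLike.re (∑ i, ∑ j, starRingEnd 𝕜 (x i) * A i j * x j) =
      ∑ k, hA.eigenvalues k * ‖inner 𝕜 (hA.eigenvectorBasis k) x‖ ^ 2 := by
  rw [sum_conj_mul_mul_eq_inner_toEuclideanLin]
  exact hA.eigenvectorBasis.re_inner_map_self hA.toEuclideanLin_eigenvectorBasis x

lemma IsHermitian.re_sum_conj_mul_mul_eigenvectorBasis {A : Matrix n n 𝕜} (hA : A.IsHermitian)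
    (k : n) :
    RCLike.re (∑ i, ∑ j, starRingEnd 𝕜 (hA.eigenvectorBasis k i) * A i j *
      hA.eigenvectorBasis k j) = hA.eigenvalues k := by
  rw [sum_conj_mul_mul_eq_inner_toEuclideanLin, hA.toEuclideanLin_eigenvectorBasis,
    inner_smul_right, inner_self_eq_norm_sq_to_K, hA.eigenvectorBasis.orthonormal.1 k]
  simp

end Matrix

section Orthonormal

variable {E ι : Type*} [NormedAddCommGroup E] [InnerProductSpace 𝕜 E] [Fintype ι]
  {e : ι → E}

lemma Orthonormal.sum_sq_norm_inner_le (he : Orthonormal 𝕜 e) (v : E) :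
    ∑ s, ‖inner 𝕜 v (e s)‖ ^ 2 ≤ ‖v‖ ^ 2 := by
  simpa only [norm_inner_symm] using he.sum_inner_products_le (s := univ) v

lemma OrthonormalBasis.sum_sum_sq_norm_inner {κ : Type*} [Fintype κ]
    (b : OrthonormalBasis κ 𝕜 E) (he : Orthonormal 𝕜 e) :
    ∑ k, ∑ s, ‖inner 𝕜 (b k) (e s)‖ ^ 2 = Fintype.card ι := by
  simp [sum_comm (γ := κ), b.sum_sq_norm_inner_right, he.1]

end Orthonormal

end Spectral

theorem stmt1_general {n q : ℕ}
    (A : Matrix (Fin n) (Fin n) ℂ) (hA : A.IsHermitian) (M : ℝ) :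
    (∀ σ : Fin q → Fin n, Function.Injective σ → M ≤ ∑ s, hA.eigenvalues (σ s)) ↔
      (∀ e : Fin q → EuclideanSpace ℂ (Fin n), Orthonormal ℂ e →
        M ≤ (∑ s, ∑ i, ∑ j, (starRingEnd ℂ) (e s i) * A i j * e s j).re) := by
  constructor
  · intro h e he
    have hb := hA.eigenvectorBasis.orthonormal
    obtain ⟨S, hS, hle⟩ := Finset.exists_card_eq_sum_le_sum_mul hA.eigenvalues
      (u := fun k => ∑ s, ‖inner ℂ (hA.eigenvectorBasis k) (e s)‖ ^ 2) (fun k => by positivity)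
      (fun k => by simpa [hb.1 k] using he.sum_sq_norm_inner_le (hA.eigenvectorBasis k))
      (by simpa using hA.eigenvectorBasis.sum_sum_sq_norm_inner he)
    calc M ≤ ∑ s, hA.eigenvalues (S.orderEmbOfFin hS s) := h _ (S.orderEmbOfFin hS).injective
      _ = ∑ k ∈ S, hA.eigenvalues k := by
        conv_rhs => rw [← S.map_orderEmbOfFin_univ hS, sum_map]
        rfl
      _ ≤ ∑ k, hA.eigenvalues k * ∑ s, ‖inner ℂ (hA.eigenvectorBasis k) (e s)‖ ^ 2 := hle
      _ = _ := by
        simp only [mul_sum]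
        rw [sum_comm, Complex.re_sum]
        exact sum_congr rfl fun s _ => (hA.re_sum_conj_mul_mul_eq (e s)).symm
  · intro h σ hσ
    calc M ≤ _ := h _ (hA.eigenvectorBasis.orthonormal.comp σ hσ)
      _ = ∑ s, hA.eigenvalues (σ s) := by
        rw [Complex.re_sum]
        exact sum_congr rfl fun s _ => hA.re_sum_conj_mul_mul_eigenvectorBasis (σ s)

theorem stmt1 {n q : ℕ} (hq1 : 1 ≤ q) (hqn : q ≤ n)
    (A : Matrix (Fin n) (Fin n) ℂ) (hA : A.IsHermitian) (M : ℝ) :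
    (∀ σ : Fin q → Fin n, Function.Injective σ → M ≤ ∑ s, hA.eigenvalues (σ s)) ↔
      (∀ e : Fin q → EuclideanSpace ℂ (Fin n), Orthonormal ℂ e →
        M ≤ (∑ s, ∑ i, ∑ j, (starRingEnd ℂ) (e s i) * A i j * e s j).re) :=
  stmt1_general A hA M
end

section
/- Let A be an n × n Hermitian matrix and 1 ≤ q ≤ n. Suppose the sum of any q eigenvalues of A is at least M. Then for every antisymmetric array (u_J) indexed by increasing multi-indices J of length q, one has ∑'_{|K|=q-1} ∑_{j,k=1}^{n} A_{jk} u_{jK} \overline{u_{kK}} ≥ M ∑'_{|J|=q} |u_J|², where the primed sums run over strictly increasing multi-indices. -/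
open Finset Complex

/-- An antisymmetric `(0,r)`-form coefficient array on `{1,…,n}`. -/
def IsAntisymmArray {n r : ℕ} (u : (Fin r → Fin n) → ℂ) : Prop :=
  ∀ (J : Fin r → Fin n) (σ : Equiv.Perm (Fin r)), u (J ∘ σ) = (Equiv.Perm.sign σ : ℤ) • u J

lemma units_smul_normSq (s : ℤˣ) (z : ℂ) : normSq ((s : ℤ) • z) = normSq z := by
  rcases Int.units_eq_one_or s with h | h <;> simp [h]

lemma units_mul_mul (s : ℤˣ) (z w : ℂ) : ((s : ℤ) • z) * ((s : ℤ) • w) = z * w := by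
  rcases Int.units_eq_one_or s with h | h <;> simp [h]

lemma IsAntisymmArray.eq_zero {n r : ℕ} {u : (Fin r → Fin n) → ℂ} (hu : IsAntisymmArray u)
    {J : Fin r → Fin n} (hJ : ¬ Function.Injective J) : u J = 0 := by
  simp only [Function.Injective, not_forall] at hJ
  obtain ⟨i, j, hij, hne⟩ := hJ
  have h1 : J ∘ Equiv.swap i j = J := by
    funext x
    simp only [Function.comp_apply]
    rcases eq_or_ne x i with rfl | hxi
    · rw [Equiv.swap_apply_left]; exact hij.symm
    rcases eq_or_ne x j with rfl | hxj
    · rw [Equiv.swap_apply_right]; exact hij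
    · rw [Equiv.swap_apply_of_ne_of_ne hxi hxj]
  have h2 := hu J (Equiv.swap i j)
  rw [h1, Equiv.Perm.sign_swap hne] at h2
  simp only [Units.val_neg, Units.val_one, neg_smul, one_smul] at h2
  have h3 : (2 : ℂ) * u J = 0 := by linear_combination h2
  simpa using h3

lemma comp_perm_bijective {r n : ℕ} (σ : Equiv.Perm (Fin r)) :
    Function.Bijective (fun J : Fin r → Fin n => J ∘ σ) := by
  refine ⟨fun f g h => funext fun x => ?_, fun f => ⟨f ∘ σ.symm, funext fun x => by simp⟩⟩
  simpa using congrFun h (σ.symm x)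

lemma sum_eq_factorial_smul {n r : ℕ} {M : Type*} [AddCommMonoid M]
    [DecidablePred (fun J : Fin r → Fin n => StrictMono J)] (g : (Fin r → Fin n) → M)
    (hg : ∀ (J : Fin r → Fin n) (σ : Equiv.Perm (Fin r)), g (J ∘ σ) = g J)
    (h0 : ∀ J : Fin r → Fin n, ¬ Function.Injective J → g J = 0) :
    ∑ J, g J = r.factorial • ∑ J ∈ univ.filter (fun J => StrictMono J), g J := by
  classical
  have step1 : ∑ J, g J
      = ∑ J ∈ univ.filter (fun J : Fin r → Fin n => Function.Injective J), g J := by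
    rw [sum_filter]
    refine Finset.sum_congr rfl fun J _ => ?_
    by_cases h : Function.Injective J
    · simp [h]
    · simp [h, h0 J h]
  have step2 : ∑ J ∈ univ.filter (fun J : Fin r → Fin n => Function.Injective J), g J
      = ∑ x ∈ (univ.filter (fun K : Fin r → Fin n => StrictMono K)) ×ˢ
          (univ : Finset (Equiv.Perm (Fin r))), g (x.1 ∘ x.2) := by
    refine Finset.sum_nbij' (i := fun J => (J ∘ Tuple.sort J, (Tuple.sort J)⁻¹))
      (j := fun x => x.1 ∘ x.2) ?_ ?_ ?_ ?_ ?_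
    · intro J hJ
      simp only [mem_filter, mem_univ, true_and] at hJ ⊢
      rw [Finset.mem_product]
      refine ⟨?_, Finset.mem_univ _⟩
      simp only [mem_filter, mem_univ, true_and]
      exact (Tuple.monotone_sort J).strictMono_of_injective (hJ.comp (Equiv.injective _))
    · intro x hx
      rw [Finset.mem_product] at hx
      simp only [mem_filter, mem_univ, true_and] at hx ⊢
      exact hx.1.injective.comp (Equiv.injective _)
    · intro J hJ
      funext x
      simp [Function.comp_apply]
    · intro x hx
      rw [Finset.mem_product] at hx
      simp only [mem_filter, mem_univ, true_and] at hx
      obtain ⟨hK, -⟩ := hx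
      set K := x.1
      set σ := x.2
      have hinj : Function.Injective (K ∘ σ) := hK.injective.comp (Equiv.injective _)
      have h1 : StrictMono ((K ∘ σ) ∘ Tuple.sort (K ∘ σ)) :=
        (Tuple.monotone_sort _).strictMono_of_injective (hinj.comp (Equiv.injective _))
      have hrange : Set.range ((K ∘ σ) ∘ Tuple.sort (K ∘ σ)) = Set.range K := by
        rw [Set.range_comp, Equiv.range_eq_univ, Set.image_univ, Set.range_comp,
          Equiv.range_eq_univ, Set.image_univ]
      have hKeq : (K ∘ σ) ∘ (Tuple.sort (K ∘ σ) : Equiv.Perm (Fin r)) = K :=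
        (h1.range_inj hK).mp hrange
      have hσ : ∀ y, σ ((Tuple.sort (K ∘ σ)) y) = y := fun y =>
        hK.injective (congrFun hKeq y)
      have hsort : (Tuple.sort (K ∘ σ)) = σ⁻¹ := by
        apply Equiv.ext
        intro y
        apply σ.injective
        rw [hσ, Equiv.Perm.inv_def, Equiv.apply_symm_apply]
      refine Prod.ext ?_ ?_
      · simpa using hKeq
      · simp [hsort]; rfl
    · intro J hJ
      simp only
      rw [hg _ ((Tuple.sort J)⁻¹), hg _ (Tuple.sort J)]
  rw [step1, step2, Finset.sum_product]
  rw [Finset.smul_sum]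
  refine Finset.sum_congr rfl fun K _ => ?_
  have : ∀ σ : Equiv.Perm (Fin r), g (K ∘ σ) = g K := fun σ => hg K σ
  simp only [this, Finset.sum_const, Finset.card_univ, Fintype.card_perm, Fintype.card_fin]

lemma delta_sum {n r : ℕ} (V : Matrix (Fin n) (Fin n) ℂ)
    (hV : ∀ a b, (∑ x, V a x * (starRingEnd ℂ) (V b x)) = if a = b then 1 else 0)
    (K K' : Fin r → Fin n) :
    ∑ I : Fin r → Fin n, ∏ s, (V (K s) (I s) * (starRingEnd ℂ) (V (K' s) (I s)))
      = if K = K' then 1 else 0 := by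
  classical
  have h1 : ∑ I : Fin r → Fin n, ∏ s, (V (K s) (I s) * (starRingEnd ℂ) (V (K' s) (I s)))
      = ∏ s, ∑ x, (V (K s) x * (starRingEnd ℂ) (V (K' s) x)) := by
    rw [Finset.prod_univ_sum]
    rw [Fintype.piFinset_univ]
  rw [h1]
  simp only [hV]
  by_cases h : K = K'
  · simp [h]
  · rw [if_neg h]
    obtain ⟨s, hs⟩ := Function.ne_iff.mp h
    exact Finset.prod_eq_zero (mem_univ s) (by simp [hs])

lemma sum_contract {n r : ℕ} (V : Matrix (Fin n) (Fin n) ℂ)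
    (hV : ∀ a b, (∑ x, V a x * (starRingEnd ℂ) (V b x)) = if a = b then 1 else 0)
    (a b : (Fin r → Fin n) → ℂ) :
    ∑ I : Fin r → Fin n,
      (∑ J, (∏ s, V (J s) (I s)) * a J) * (starRingEnd ℂ) (∑ J, (∏ s, V (J s) (I s)) * b J)
      = ∑ J, a J * (starRingEnd ℂ) (b J) := by
  classical
  have expand : ∀ I : Fin r → Fin n,
      (∑ J, (∏ s, V (J s) (I s)) * a J) * (starRingEnd ℂ) (∑ J, (∏ s, V (J s) (I s)) * b J)
      = ∑ J, ∑ J', (a J * (starRingEnd ℂ) (b J')) *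
          ∏ s, (V (J s) (I s) * (starRingEnd ℂ) (V (J' s) (I s))) := by
    intro I
    rw [map_sum, Finset.sum_mul_sum]
    refine Finset.sum_congr rfl fun J _ => Finset.sum_congr rfl fun J' _ => ?_
    rw [Finset.prod_mul_distrib, map_mul, map_prod]
    ring
  simp only [expand]
  rw [Finset.sum_comm]
  refine Finset.sum_congr rfl fun J _ => ?_
  rw [Finset.sum_comm]
  have : ∀ J' : Fin r → Fin n,
      ∑ I : Fin r → Fin n, (a J * (starRingEnd ℂ) (b J')) *
        ∏ s, (V (J s) (I s) * (starRingEnd ℂ) (V (J' s) (I s)))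
      = (a J * (starRingEnd ℂ) (b J')) * if J = J' then 1 else 0 := by
    intro J'
    rw [← Finset.mul_sum, delta_sum V hV]
  simp only [this, mul_ite, mul_one, mul_zero]
  simp

lemma split_sum {n p : ℕ} (f : (Fin (p + 1) → Fin n) → ℂ) :
    ∑ J, f J = ∑ j : Fin n, ∑ K : Fin p → Fin n, f (Fin.cons j K) := by
  rw [← Equiv.sum_comp (Fin.consEquiv (fun _ : Fin (p + 1) => Fin n)) f, Fintype.sum_prod_type]
  rfl

open Classical in
theorem stmt2 {n p : ℕ} (hpn : p + 1 ≤ n) (A : Matrix (Fin n) (Fin n) ℂ)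
    (hA : A.IsHermitian) (M : ℝ)
    (hM : ∀ σ : Fin (p + 1) → Fin n, Function.Injective σ → M ≤ ∑ s, hA.eigenvalues (σ s))
    (u : (Fin (p + 1) → Fin n) → ℂ) (hu : IsAntisymmArray u) :
    M * ∑ J ∈ univ.filter (fun J : Fin (p + 1) → Fin n => StrictMono J), normSq (u J) ≤
      (∑ K ∈ univ.filter (fun K : Fin p → Fin n => StrictMono K),
        ∑ j, ∑ k, A j k * u (Fin.cons j K) * (starRingEnd ℂ) (u (Fin.cons k K))).re := by
  set lam := hA.eigenvalues with hlam
  set V : Matrix (Fin n) (Fin n) ℂ := (hA.eigenvectorUnitary : Matrix (Fin n) (Fin n) ℂ)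
    with hVdef
  -- unitarity, entrywise
  have hVV : ∀ a b, (∑ x, V a x * (starRingEnd ℂ) (V b x)) = if a = b then 1 else 0 := by
    intro a b
    have h1 : V * star V = 1 := (Matrix.mem_unitaryGroup_iff).mp (hA.eigenvectorUnitary).2
    have h2 := congrFun (congrFun h1 a) b
    rw [Matrix.mul_apply] at h2
    simp only [Matrix.star_apply, Matrix.one_apply] at h2
    simpa using h2
  -- spectral theorem, entrywise
  have hAapp : ∀ j k, A j k = ∑ i, (lam i : ℂ) * (V j i * (starRingEnd ℂ) (V k i)) := by
    intro j k
    have h := congrFun (congrFun hA.spectral_theorem j) k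
    rw [Unitary.conjStarAlgAut_apply, Matrix.mul_apply] at h
    simp only [Matrix.mul_diagonal, Matrix.star_apply, Function.comp_apply] at h
    rw [h]
    refine Finset.sum_congr rfl fun i _ => ?_
    have : (RCLike.ofReal (lam i) : ℂ) = (lam i : ℂ) := rfl
    rw [this]
    ring_nf
    rw [mul_comm ((hA.eigenvectorUnitary : Matrix (Fin n) (Fin n) ℂ) j i)]
    rfl
  -- transformed array
  set w : (Fin (p + 1) → Fin n) → ℂ := fun I => ∑ J, (∏ s, V (J s) (I s)) * u J with hw
  have hwanti : IsAntisymmArray w := by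
    intro I σ
    have step1 : w (I ∘ σ) = ∑ J, (∏ s, V (J (σ s)) (I (σ s))) * u (J ∘ σ) :=
      (Fintype.sum_bijective _ (comp_perm_bijective σ) _ _ fun J => rfl).symm
    rw [step1]
    have step2 : ∀ J : Fin (p + 1) → Fin n,
        (∏ s, V (J (σ s)) (I (σ s))) * u (J ∘ σ)
          = (Equiv.Perm.sign σ : ℤ) • ((∏ s, V (J s) (I s)) * u J) := by
      intro J
      rw [hu J σ, Equiv.prod_comp σ (fun s => V (J s) (I s)), mul_smul_comm]
    simp only [step2]
    rw [← Finset.smul_sum]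
  -- Parseval
  have hPar : ∑ I, w I * (starRingEnd ℂ) (w I) = ∑ J, u J * (starRingEnd ℂ) (u J) :=
    sum_contract V hVV u u
  have hParR : ∑ I, normSq (w I) = ∑ J, normSq (u J) := by
    simp only [Complex.mul_conj] at hPar
    exact_mod_cast hPar
  -- splitting of w on cons
  have hwcons : ∀ (i : Fin n) (I : Fin p → Fin n),
      w (Fin.cons i I)
        = ∑ K : Fin p → Fin n, (∏ s, V (K s) (I s)) * (∑ j, V j i * u (Fin.cons j K)) := by
    intro i I
    rw [hw]
    simp only
    rw [split_sum, Finset.sum_comm]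
    refine Finset.sum_congr rfl fun K _ => ?_
    rw [Finset.mul_sum]
    refine Finset.sum_congr rfl fun j _ => ?_
    rw [Fin.prod_univ_succ]
    simp only [Fin.cons_zero, Fin.cons_succ]
    ring
  -- claim 1 : diagonalization of the quadratic form
  have claim1 : ∑ J : Fin (p + 1) → Fin n, (lam (J 0) : ℂ) * (w J * (starRingEnd ℂ) (w J))
      = ∑ K : Fin p → Fin n, ∑ j, ∑ k,
          A j k * u (Fin.cons j K) * (starRingEnd ℂ) (u (Fin.cons k K)) := by
    rw [split_sum]
    have step : ∀ i : Fin n,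
        ∑ I : Fin p → Fin n, (lam ((Fin.cons i I : Fin (p + 1) → Fin n) 0) : ℂ) *
            (w (Fin.cons i I) * (starRingEnd ℂ) (w (Fin.cons i I)))
        = ∑ K : Fin p → Fin n, (lam i : ℂ) *
            ((∑ j, V j i * u (Fin.cons j K)) *
              (starRingEnd ℂ) (∑ k, V k i * u (Fin.cons k K))) := by
      intro i
      have hc := sum_contract V hVV (fun K => ∑ j, V j i * u (Fin.cons j K))
        (fun K => ∑ j, V j i * u (Fin.cons j K))
      calc ∑ I : Fin p → Fin n, (lam ((Fin.cons i I : Fin (p + 1) → Fin n) 0) : ℂ) *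
            (w (Fin.cons i I) * (starRingEnd ℂ) (w (Fin.cons i I)))
          = (lam i : ℂ) * ∑ I : Fin p → Fin n,
              (w (Fin.cons i I) * (starRingEnd ℂ) (w (Fin.cons i I))) := by
            rw [Finset.mul_sum]
            refine Finset.sum_congr rfl fun I _ => ?_
            rw [Fin.cons_zero]
        _ = (lam i : ℂ) * ∑ K : Fin p → Fin n,
              ((∑ j, V j i * u (Fin.cons j K)) *
                (starRingEnd ℂ) (∑ k, V k i * u (Fin.cons k K))) := by
            rw [← hc]
            congr 1
            refine Finset.sum_congr rfl fun I _ => ?_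
            rw [hwcons i I]
        _ = _ := Finset.mul_sum _ _ _
    calc ∑ i : Fin n, ∑ I : Fin p → Fin n, (lam ((Fin.cons i I : Fin (p + 1) → Fin n) 0) : ℂ) *
            (w (Fin.cons i I) * (starRingEnd ℂ) (w (Fin.cons i I)))
        = ∑ i : Fin n, ∑ K : Fin p → Fin n, (lam i : ℂ) *
            ((∑ j, V j i * u (Fin.cons j K)) *
              (starRingEnd ℂ) (∑ k, V k i * u (Fin.cons k K))) :=
          Finset.sum_congr rfl fun i _ => step i
      _ = ∑ K : Fin p → Fin n, ∑ i : Fin n, (lam i : ℂ) *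
            ((∑ j, V j i * u (Fin.cons j K)) *
              (starRingEnd ℂ) (∑ k, V k i * u (Fin.cons k K))) := Finset.sum_comm
      _ = _ := by
          refine Finset.sum_congr rfl fun K _ => ?_
          have expand : ∀ i : Fin n, (lam i : ℂ) *
              ((∑ j, V j i * u (Fin.cons j K)) *
                (starRingEnd ℂ) (∑ k, V k i * u (Fin.cons k K)))
              = ∑ j, ∑ k, (lam i : ℂ) * (V j i * (starRingEnd ℂ) (V k i)) *
                  u (Fin.cons j K) * (starRingEnd ℂ) (u (Fin.cons k K)) := by
            intro i
            rw [map_sum, Finset.sum_mul_sum, Finset.mul_sum]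
            refine Finset.sum_congr rfl fun j _ => ?_
            rw [Finset.mul_sum]
            refine Finset.sum_congr rfl fun k _ => ?_
            rw [map_mul]
            ring
          simp only [expand]
          rw [Finset.sum_comm]
          refine Finset.sum_congr rfl fun j _ => ?_
          rw [Finset.sum_comm]
          refine Finset.sum_congr rfl fun k _ => ?_
          rw [hAapp j k, Finset.sum_mul, Finset.sum_mul]
  -- position invariance
  have hpos : ∀ s : Fin (p + 1),
      ∑ J : Fin (p + 1) → Fin n, lam (J s) * normSq (w J)
        = ∑ J : Fin (p + 1) → Fin n, lam (J 0) * normSq (w J) := by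
    intro s
    refine Fintype.sum_bijective (fun J : Fin (p + 1) → Fin n => J ∘ Equiv.swap 0 s)
      (comp_perm_bijective _) _ _ fun J => ?_
    simp only [Function.comp_apply, Equiv.swap_apply_left]
    congr 1
    rw [hwanti J (Equiv.swap 0 s)]
    exact (units_smul_normSq _ _).symm
  -- real form of claim1
  set Ssum : ℂ := ∑ K ∈ univ.filter (fun K : Fin p → Fin n => StrictMono K),
      ∑ j, ∑ k, A j k * u (Fin.cons j K) * (starRingEnd ℂ) (u (Fin.cons k K)) with hSsum
  set R : ℝ := ∑ J ∈ univ.filter (fun J : Fin (p + 1) → Fin n => StrictMono J), normSq (u J)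
    with hR
  set T : ℝ := ∑ J : Fin (p + 1) → Fin n, lam (J 0) * normSq (w J) with hT
  -- counting for S
  have hSfact : (∑ K : Fin p → Fin n, ∑ j, ∑ k,
      A j k * u (Fin.cons j K) * (starRingEnd ℂ) (u (Fin.cons k K))) = p.factorial • Ssum := by
    rw [hSsum]
    refine sum_eq_factorial_smul _ ?_ ?_
    · intro K σ
      refine Finset.sum_congr rfl fun j _ => Finset.sum_congr rfl fun k _ => ?_
      have hcomp : ∀ m : Fin n, Fin.cons m (K ∘ σ)
          = (Fin.cons m K : Fin (p + 1) → Fin n) ∘ (Equiv.Perm.decomposeFin.symm (0, σ)) := by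
        intro m
        funext x
        refine Fin.cases ?_ (fun y => ?_) x
        · simp [Equiv.Perm.decomposeFin_symm_apply_zero]
        · simp [Equiv.Perm.decomposeFin_symm_apply_succ]
      rw [hcomp j, hcomp k, hu _ (Equiv.Perm.decomposeFin.symm (0, σ)),
        hu _ (Equiv.Perm.decomposeFin.symm (0, σ))]
      set m := Equiv.Perm.sign (Equiv.Perm.decomposeFin.symm (0, σ))
      rcases Int.units_eq_one_or m with h | h <;> simp [h] <;> try ring
    · intro K hK
      have hcons : ∀ j : Fin n, ¬ Function.Injective (Fin.cons j K : Fin (p + 1) → Fin n) := by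
        intro j hinj
        apply hK
        have : K = (Fin.cons j K : Fin (p + 1) → Fin n) ∘ Fin.succ := by
          funext x; simp
        rw [this]
        exact hinj.comp (Fin.succ_injective p)
      refine Finset.sum_eq_zero fun j _ => Finset.sum_eq_zero fun k _ => ?_
      rw [hu.eq_zero (hcons j)]
      ring
  -- counting for u
  have hufact : (∑ J : Fin (p + 1) → Fin n, normSq (u J)) = (p + 1).factorial • R := by
    rw [hR]
    refine sum_eq_factorial_smul _ ?_ ?_
    · intro J σ
      rw [hu J σ]
      exact units_smul_normSq _ _
    · intro J hJ
      rw [hu.eq_zero hJ]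
      simp
  -- T = p! * Ssum.re
  have hTS : T = (p.factorial : ℝ) * Ssum.re := by
    have h1 : ((T : ℝ) : ℂ) = p.factorial • Ssum := by
      rw [← hSfact, ← claim1, hT]
      push_cast
      refine Finset.sum_congr rfl fun J _ => ?_
      rw [Complex.mul_conj]
    have h2 := congrArg Complex.re h1
    rw [Complex.ofReal_re] at h2
    rw [h2, nsmul_eq_mul]
    simp [Complex.mul_re]
  -- the inequality
  have hineq : M * (((p + 1).factorial : ℝ) * R) ≤ ((p : ℝ) + 1) * T := by
    have e1 : ((p : ℝ) + 1) * T = ∑ J : Fin (p + 1) → Fin n,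
        (∑ s, lam (J s)) * normSq (w J) := by
      have e2 : ∑ s : Fin (p + 1), ∑ J : Fin (p + 1) → Fin n, lam (J s) * normSq (w J)
          = ((p : ℝ) + 1) * T := by
        calc ∑ s : Fin (p + 1), ∑ J : Fin (p + 1) → Fin n, lam (J s) * normSq (w J)
            = ∑ s : Fin (p + 1), T := Finset.sum_congr rfl fun s _ => hpos s
          _ = ((p : ℝ) + 1) * T := by
              rw [Finset.sum_const, Finset.card_univ, Fintype.card_fin, nsmul_eq_mul]
              push_cast
              ring
      rw [← e2, Finset.sum_comm]
      refine Finset.sum_congr rfl fun J _ => ?_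
      rw [Finset.sum_mul]
    rw [e1]
    have e3 : M * (((p + 1).factorial : ℝ) * R) = ∑ J : Fin (p + 1) → Fin n,
        M * normSq (w J) := by
      rw [← Finset.mul_sum, hParR, hufact]
      rw [nsmul_eq_mul]
    rw [e3]
    refine Finset.sum_le_sum fun J _ => ?_
    by_cases hJ : Function.Injective J
    · exact mul_le_mul_of_nonneg_right (hM J hJ) (normSq_nonneg _)
    · rw [hwanti.eq_zero hJ]
      simp
  -- conclude
  have hp1 : (0 : ℝ) < (p : ℝ) + 1 := by positivity
  have hpf : (0 : ℝ) < (p.factorial : ℝ) := by exact_mod_cast p.factorial_pos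
  have hfact : (((p + 1).factorial : ℝ)) = ((p : ℝ) + 1) * (p.factorial : ℝ) := by
    rw [Nat.factorial_succ]
    push_cast
    ring
  rw [hTS, hfact] at hineq
  -- hineq : M * (((p+1) * p!) * R) ≤ (p+1) * (p! * Ssum.re)
  have h4 : M * R ≤ Ssum.re := by
    have h5 : M * R * (((p : ℝ) + 1) * (p.factorial : ℝ))
        ≤ Ssum.re * (((p : ℝ) + 1) * (p.factorial : ℝ)) := by ring_nf; ring_nf at hineq; linarith
    exact le_of_mul_le_mul_right h5 (by positivity)
  exact h4
end

section
/- (Schur majorization, minimal form) Let A be an n × n Hermitian matrix with eigenvalues λ₁ ≤ λ₂ ≤ ⋯ ≤ λₙ, and let 1 ≤ q ≤ n. Then for any q distinct indices i₁ < i₂ < ⋯ < i_q, the sum of the corresponding diagonal entries satisfies A_{i₁i₁} + ⋯ + A_{i_q i_q} ≥ λ₁ + λ₂ + ⋯ + λ_q. -/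
/-!
Write `A = U D U*` with `U` unitary and `D` the diagonal of eigenvalues. Then
`A_jj = ∑ₖ λₖ |U_jk|²`, so the chosen diagonal entries sum to `∑ₖ λₖ tₖ` with
`tₖ = ∑ₛ |U_{iₛ k}|²`. Since the rows and columns of `U` are unit vectors, the weights satisfy
`0 ≤ tₖ ≤ 1` and `∑ₖ tₖ = q`, and among all such weightings of the increasingly ordered
eigenvalues, the sum of the `q` smallest is the minimum.
-/

open Finset

/-- Comparing both sides with the threshold `c` term by term:
`∑ₖ μₖ wₖ - ∑_{k ∈ S} μₖ = ∑_{k ∈ S} (μₖ - c)(wₖ - 1) + ∑_{k ∉ S} (μₖ - c) wₖ ≥ 0`. -/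
lemma Finset.sum_le_sum_mul_of_le_of_ge {ι : Type*} [Fintype ι] [DecidableEq ι] (S : Finset ι)
    {μ w : ι → ℝ} {c : ℝ} (hS : ∀ k ∈ S, μ k ≤ c) (hSc : ∀ k ∉ S, c ≤ μ k)
    (hw₀ : ∀ k, 0 ≤ w k) (hw₁ : ∀ k, w k ≤ 1) (hw : ∑ k, w k = #S) :
    ∑ k ∈ S, μ k ≤ ∑ k, μ k * w k := by
  have hin : ∑ k ∈ S, (μ k - c) ≤ ∑ k ∈ S, (μ k - c) * w k :=
    sum_le_sum fun k hk => by nlinarith [hw₁ k, hS k hk]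
  have hout : 0 ≤ ∑ k ∈ Sᶜ, (μ k - c) * w k :=
    sum_nonneg fun k hk => mul_nonneg (by linarith [hSc k (mem_compl.mp hk)]) (hw₀ k)
  have hsplit := sum_add_sum_compl S fun k => (μ k - c) * w k
  have hshift : ∑ k, (μ k - c) * w k = ∑ k, μ k * w k - c * #S := by
    simp only [sub_mul, sum_sub_distrib, ← mul_sum, hw]
  have hS_shift : ∑ k ∈ S, (μ k - c) = ∑ k ∈ S, μ k - c * #S := by
    simp only [sum_sub_distrib, sum_const, nsmul_eq_mul, mul_comm]
  linarith

lemma Monotone.sum_castLE_le_sum_mul {n q : ℕ} (hq : q ≤ n) {μ w : Fin n → ℝ} (hμ : Monotone μ)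
    (hw₀ : ∀ k, 0 ≤ w k) (hw₁ : ∀ k, w k ≤ 1) (hw : ∑ k, w k = q) :
    ∑ s : Fin q, μ (Fin.castLE hq s) ≤ ∑ k, μ k * w k := by
  rcases q with _ | m
  · have hw_zero : ∀ k, w k = 0 :=
      congr_fun ((Fintype.sum_eq_zero_iff_of_nonneg hw₀).mp (by exact_mod_cast hw))
    simp [hw_zero]
  · set S := univ.map (Fin.castLEEmb hq)
    have hmem : ∀ k, k ∈ S ↔ (k : ℕ) ≤ m := fun k => by
      simp only [S, mem_map, mem_univ, true_and, Fin.castLEEmb_apply]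
      exact ⟨by rintro ⟨s, rfl⟩; exact Nat.lt_succ_iff.mp s.isLt,
        fun hk => ⟨⟨k, Nat.lt_succ_of_le hk⟩, rfl⟩⟩
    have hsum : ∑ s : Fin (m + 1), μ (Fin.castLE hq s) = ∑ k ∈ S, μ k := by
      rw [sum_map]; rfl
    rw [hsum]
    refine S.sum_le_sum_mul_of_le_of_ge (c := μ ⟨m, hq⟩)
      (fun k hk => hμ ((hmem k).mp hk)) (fun k hk => hμ ?_) hw₀ hw₁ (by simpa [S] using hw)
    exact (not_le.mp ((hmem k).not.mp hk)).le

namespace Matrix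

variable {𝕜 n : Type*} [RCLike 𝕜] [Fintype n] [DecidableEq n]

lemma sum_norm_sq_row_of_mem_unitaryGroup {U : Matrix n n 𝕜} (hU : U ∈ unitaryGroup n 𝕜)
    (j : n) : ∑ k, ‖U j k‖ ^ 2 = 1 := by
  have := congr_fun₂ (mem_unitaryGroup_iff.mp hU) j j
  simp only [mul_apply, star_apply, RCLike.star_def, RCLike.mul_conj, one_apply_eq] at this
  exact_mod_cast this

lemma sum_norm_sq_col_of_mem_unitaryGroup {U : Matrix n n 𝕜} (hU : U ∈ unitaryGroup n 𝕜)
    (k : n) : ∑ j, ‖U j k‖ ^ 2 = 1 := by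
  have := congr_fun₂ (mem_unitaryGroup_iff'.mp hU) k k
  simp only [mul_apply, star_apply, RCLike.star_def, RCLike.conj_mul, one_apply_eq] at this
  exact_mod_cast this

lemma sum_norm_sq_comp_le_one_of_mem_unitaryGroup {U : Matrix n n 𝕜}
    (hU : U ∈ unitaryGroup n 𝕜) {ι : Type*} [Fintype ι] {i : ι → n}
    (hi : Function.Injective i) (k : n) : ∑ s, ‖U (i s) k‖ ^ 2 ≤ 1 :=
  calc ∑ s, ‖U (i s) k‖ ^ 2 = ∑ j ∈ univ.map ⟨i, hi⟩, ‖U j k‖ ^ 2 := by rw [sum_map]; rfl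
    _ ≤ ∑ j, ‖U j k‖ ^ 2 := sum_le_univ_sum_of_nonneg fun _ => by positivity
    _ = 1 := sum_norm_sq_col_of_mem_unitaryGroup hU k

lemma IsHermitian.re_diag_eq_sum_eigenvalues_mul {A : Matrix n n 𝕜} (hA : A.IsHermitian) (j : n) :
    RCLike.re (A j j) =
      ∑ k, hA.eigenvalues k * ‖(hA.eigenvectorUnitary : Matrix n n 𝕜) j k‖ ^ 2 := by
  conv_lhs => rw [hA.spectral_theorem, Unitary.conjStarAlgAut_apply]
  rw [mul_apply, map_sum]
  refine sum_congr rfl fun k _ => ?_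
  simp only [mul_diagonal, star_apply, RCLike.star_def, Function.comp_apply]
  rw [mul_right_comm, RCLike.mul_conj]
  norm_cast
  simp [mul_comm]

end Matrix

theorem stmt3 {n q : ℕ} (hq : q ≤ n) (A : Matrix (Fin n) (Fin n) ℂ) (hA : A.IsHermitian)
    (μ : Fin n → ℝ) (hmono : Monotone μ)
    (hperm : ∃ σ : Equiv.Perm (Fin n), μ = hA.eigenvalues ∘ σ)
    (i : Fin q → Fin n) (hi : StrictMono i) :
    ∑ s : Fin q, μ (Fin.castLE hq s) ≤ ∑ s : Fin q, (A (i s) (i s)).re := by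
  obtain ⟨σ, rfl⟩ := hperm
  set U : Matrix (Fin n) (Fin n) ℂ := ↑hA.eigenvectorUnitary
  have hU : U ∈ Matrix.unitaryGroup (Fin n) ℂ := hA.eigenvectorUnitary.2
  set t : Fin n → ℝ := fun k => ∑ s, ‖U (i s) k‖ ^ 2
  have hdiag : ∑ s, (A (i s) (i s)).re = ∑ k, hA.eigenvalues (σ k) * t (σ k) := by
    simp only [← RCLike.re_to_complex, hA.re_diag_eq_sum_eigenvalues_mul, t, mul_sum]
    rw [sum_comm, Equiv.sum_comp σ fun k => ∑ s, hA.eigenvalues k * ‖U (i s) k‖ ^ 2]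
  have ht : ∑ k, t (σ k) = q := by
    simp only [Equiv.sum_comp σ t, t]
    rw [sum_comm]
    simp [Matrix.sum_norm_sq_row_of_mem_unitaryGroup hU]
  rw [hdiag]
  exact hmono.sum_castLE_le_sum_mul hq (fun _ => by positivity)
    (fun k => Matrix.sum_norm_sq_comp_le_one_of_mem_unitaryGroup hU hi.injective (σ k)) ht
end

section
/- Let A be an n × n Hermitian matrix, M > 0, and 1 ≤ q ≤ n − 1. If the sum of any q eigenvalues of A is at least M, then there exists an index t with 1 ≤ t ≤ n and A_{tt} ≥ M/q. -/
open Finset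

/-- Averaging over the `n` cyclic shifts of `Fin q ↪ Fin n` counts every index exactly `q` times. -/
theorem Fin.nsmul_le_nsmul_sum_of_le_sum_comp_injective {α : Type*} [AddCommMonoid α]
    [PartialOrder α] [IsOrderedAddMonoid α] {n q : ℕ} (hqn : q ≤ n) (f : Fin n → α) (M : α)
    (h : ∀ σ : Fin q → Fin n, Function.Injective σ → M ≤ ∑ s, f (σ s)) :
    n • M ≤ q • ∑ i, f i := by
  cases n with
  | zero => simp
  | succ m =>
    let shift (r : Fin (m + 1)) (s : Fin q) : Fin (m + 1) := Fin.castLE hqn s + r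
    have hshift (r : Fin (m + 1)) : Function.Injective (shift r) :=
      (add_left_injective r).comp (Fin.castLE_injective hqn)
    calc (m + 1) • M = ∑ _r : Fin (m + 1), M := by simp
      _ ≤ ∑ r, ∑ s, f (shift r s) := sum_le_sum fun r _ ↦ h _ (hshift r)
      _ = ∑ s : Fin q, ∑ r, f (Fin.castLE hqn s + r) := sum_comm
      _ = ∑ _s : Fin q, ∑ i, f i :=
        sum_congr rfl fun s _ ↦ Equiv.sum_comp (Equiv.addLeft (Fin.castLE hqn s)) f
      _ = q • ∑ i, f i := by simp

theorem Matrix.IsHermitian.sum_eigenvalues_eq_sum_re_diag {ι : Type*} [Fintype ι]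
    [DecidableEq ι] {𝕜 : Type*} [RCLike 𝕜] {A : Matrix ι ι 𝕜} (hA : A.IsHermitian) :
    ∑ i, hA.eigenvalues i = ∑ i, RCLike.re (A i i) := by
  simpa [Matrix.trace, map_sum] using (congrArg RCLike.re hA.trace_eq_sum_eigenvalues).symm

theorem stmt4_general {n q : ℕ} (hq1 : 1 ≤ q) (hqn : q ≤ n - 1) (M : ℝ)
    (A : Matrix (Fin n) (Fin n) ℂ) (hA : A.IsHermitian)
    (h : ∀ σ : Fin q → Fin n, Function.Injective σ → M ≤ ∑ s, hA.eigenvalues (σ s)) :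
    ∃ t : Fin n, M / q ≤ (A t t).re := by
  have hq : (0 : ℝ) < q := by exact_mod_cast hq1
  have havg := Fin.nsmul_le_nsmul_sum_of_le_sum_comp_injective (by omega) _ M h
  rw [nsmul_eq_mul, nsmul_eq_mul, hA.sum_eigenvalues_eq_sum_re_diag] at havg
  have hdiag : ∑ _t : Fin n, M / q ≤ ∑ t, (A t t).re := by
    rw [sum_const, card_univ, Fintype.card_fin, nsmul_eq_mul, mul_div_assoc', div_le_iff₀ hq,
      mul_comm _ (q : ℝ)]
    exact havg
  obtain ⟨t, -, ht⟩ := exists_le_of_sum_le (univ_nonempty_iff.2 ⟨⟨0, by omega⟩⟩) hdiag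
  exact ⟨t, ht⟩

theorem stmt4 {n q : ℕ} (hq1 : 1 ≤ q) (hqn : q ≤ n - 1) (M : ℝ) (hM : 0 < M)
    (A : Matrix (Fin n) (Fin n) ℂ) (hA : A.IsHermitian)
    (h : ∀ σ : Fin q → Fin n, Function.Injective σ → M ≤ ∑ s, hA.eigenvalues (σ s)) :
    ∃ t : Fin n, M / q ≤ (A t t).re :=
  stmt4_general hq1 hqn M A hA h
end

section
/- Let A be an n × n Hermitian positive semidefinite matrix (e.g., a Levi form of a pseudoconvex boundary) that is diagonal. Fix 1 ≤ s ≤ n − 1 and let I_s be the set of indices of the s smallest diagonal entries of A. Then for every q with s + 1 ≤ q ≤ n and every antisymmetric (0,q)-form coefficient array u on {1,…,n}, ∑'_{|K|=q-1} ∑_{j,k} A_{jk} u_{jK} \overline{u_{kK}} − ∑'_{|J|=q} ∑_{j ∈ I_s} A_{jj} |u_J|² ≥ 0. -/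
open Finset Complex ComplexOrder

namespace Stmt5Aux

variable {n r : ℕ}

lemma antisymm_vanish {u : (Fin r → Fin n) → ℂ} (hu : IsAntisymmArray u)
    {J : Fin r → Fin n} (hJ : ¬ Function.Injective J) : u J = 0 := by
  rw [Function.Injective] at hJ; push_neg at hJ
  obtain ⟨a, b, hab, hne⟩ := hJ
  have h1 := hu J (Equiv.swap a b)
  have h2 : J ∘ (Equiv.swap a b) = J := by
    funext x
    rcases eq_or_ne x a with rfl | hx
    · simp [Equiv.swap_apply_left, hab]
    rcases eq_or_ne x b with rfl | hx2
    · simp [Equiv.swap_apply_right, hab]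
    · simp [Equiv.swap_apply_of_ne_of_ne hx hx2]
  rw [h2, Equiv.Perm.sign_swap hne] at h1
  have h3 : (2 : ℂ) * u J = 0 := by
    simp only [Units.val_neg, Units.val_one, neg_smul, one_smul] at h1
    linear_combination h1
  exact (mul_eq_zero.mp h3).resolve_left two_ne_zero

lemma normSq_perm {u : (Fin r → Fin n) → ℂ} (hu : IsAntisymmArray u)
    (J : Fin r → Fin n) (σ : Equiv.Perm (Fin r)) : normSq (u (J ∘ σ)) = normSq (u J) := by
  rw [hu J σ]
  rcases Int.units_eq_one_or (Equiv.Perm.sign σ) with h | h <;> simp [h]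

lemma strictMono_eq_of_image_eq {f g : Fin r → Fin n} (hf : StrictMono f) (hg : StrictMono g)
    (h : image f univ = image g univ) : f = g := by
  have hcf : (image f univ).card = r := by
    rw [Finset.card_image_of_injective _ hf.injective, card_univ, Fintype.card_fin]
  have h1 := Finset.orderEmbOfFin_unique hcf
    (fun x => Finset.mem_image_of_mem f (mem_univ x)) hf
  have h2 := Finset.orderEmbOfFin_unique hcf
    (fun x => h ▸ Finset.mem_image_of_mem g (mem_univ x)) hg
  exact h1.trans h2.symm

lemma image_cons {K : Fin r → Fin n} {j : Fin n} :
    image (Fin.cons j K) univ = insert j (image K univ) := by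
  ext t
  simp only [mem_image, mem_univ, true_and, mem_insert, Fin.exists_fin_succ, Fin.cons_zero,
    Fin.cons_succ]
  tauto

lemma cons_injective {K : Fin r → Fin n} (hK : Function.Injective K) {j : Fin n}
    (hj : ∀ i, K i ≠ j) : Function.Injective (Fin.cons j K) := by
  intro x y h
  induction x using Fin.cases with
  | zero => induction y using Fin.cases with
    | zero => rfl
    | succ b => simp only [Fin.cons_zero, Fin.cons_succ] at h; exact absurd h.symm (hj b)
  | succ a => induction y using Fin.cases with
    | zero => simp only [Fin.cons_zero, Fin.cons_succ] at h; exact absurd h (hj a)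
    | succ b => simp only [Fin.cons_succ] at h; rw [hK h]

lemma image_comp_perm (f : Fin r → Fin n) (σ : Equiv.Perm (Fin r)) :
    image (f ∘ σ) univ = image f univ := by
  rw [← Finset.image_image]
  congr 1
  ext t
  simp only [mem_image, mem_univ, true_and, iff_true]
  exact σ.surjective t

lemma image_succAbove (i : Fin (r + 1)) :
    image i.succAbove univ = univ.erase i := by
  ext t
  simp [Fin.exists_succAbove_eq_iff]

lemma image_removeNth {J : Fin (r + 1) → Fin n} (hJ : Function.Injective J) (i : Fin (r + 1)) :
    image (Fin.removeNth i J) univ = (image J univ).erase (J i) := by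
  have h1 : Fin.removeNth i J = J ∘ i.succAbove := rfl
  rw [h1, ← Finset.image_image, image_succAbove, Finset.image_erase hJ]

lemma key_sets {n : ℕ} (a : Fin n → ℝ) (ha : ∀ j, 0 ≤ a j) (I T : Finset (Fin n))
    (hsmall : ∀ i ∈ I, ∀ j ∉ I, a i ≤ a j) (hcard : I.card ≤ T.card) :
    ∑ i ∈ I, a i ≤ ∑ j ∈ T, a j := by
  have e1 : ∑ i ∈ I ∩ T, a i + ∑ i ∈ I \ T, a i = ∑ i ∈ I, a i :=
    Finset.sum_inter_add_sum_sdiff I T a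
  have e2 : ∑ i ∈ T ∩ I, a i + ∑ i ∈ T \ I, a i = ∑ i ∈ T, a i :=
    Finset.sum_inter_add_sum_sdiff T I a
  rw [inter_comm] at e2
  have hkey : ∑ i ∈ I \ T, a i ≤ ∑ i ∈ T \ I, a i := by
    have hc1 := Finset.card_inter_add_card_sdiff I T
    have hc2 := Finset.card_inter_add_card_sdiff T I
    rw [inter_comm] at hc2
    have hm : (I \ T).card ≤ (T \ I).card := by omega
    set m := (I \ T).card with hmdef
    set m' := (T \ I).card with hm'def
    have g1 : ∑ i ∈ I \ T, a i = ∑ k : Fin m, a ((I \ T).orderEmbOfFin rfl k) := by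
      rw [← Finset.sum_coe_sort (I \ T) a,
        ← Equiv.sum_comp ((I \ T).orderIsoOfFin rfl).toEquiv (fun x => a (x : Fin n))]
      rfl
    have g2 : ∑ i ∈ T \ I, a i = ∑ k : Fin m', a ((T \ I).orderEmbOfFin rfl k) := by
      rw [← Finset.sum_coe_sort (T \ I) a,
        ← Equiv.sum_comp ((T \ I).orderIsoOfFin rfl).toEquiv (fun x => a (x : Fin n))]
      rfl
    rw [g1, g2]
    calc ∑ k : Fin m, a ((I \ T).orderEmbOfFin rfl k)
        ≤ ∑ k : Fin m, a ((T \ I).orderEmbOfFin rfl (Fin.castLEEmb hm k)) := by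
          apply Finset.sum_le_sum
          intro k _
          have h1 : (I \ T).orderEmbOfFin rfl k ∈ I :=
            (Finset.mem_sdiff.mp (Finset.orderEmbOfFin_mem _ rfl k)).1
          have h2 : (T \ I).orderEmbOfFin rfl (Fin.castLEEmb hm k) ∉ I :=
            (Finset.mem_sdiff.mp (Finset.orderEmbOfFin_mem _ rfl _)).2
          exact hsmall _ h1 _ h2
      _ ≤ ∑ k : Fin m', a ((T \ I).orderEmbOfFin rfl k) := by
          rw [← Finset.sum_map univ (Fin.castLEEmb hm)
            (fun k => a ((T \ I).orderEmbOfFin rfl k))]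
          apply Finset.sum_le_sum_of_subset_of_nonneg (Finset.subset_univ _)
          intro k _ _
          exact ha _
  linarith

end Stmt5Aux

open Stmt5Aux in
open Classical in
theorem stmt5 {n s p : ℕ} (hs1 : 1 ≤ s) (hsp : s ≤ p) (hpn : p + 1 ≤ n)
    (A : Matrix (Fin n) (Fin n) ℂ) (hA : A.PosSemidef)
    (hdiag : ∀ j k, j ≠ k → A j k = 0)
    (I : Finset (Fin n)) (hcard : I.card = s)
    (hsmall : ∀ i ∈ I, ∀ j ∉ I, (A i i).re ≤ (A j j).re)
    (u : (Fin (p + 1) → Fin n) → ℂ) (hu : IsAntisymmArray u) :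
    0 ≤ (∑ K ∈ univ.filter (fun K : Fin p → Fin n => StrictMono K),
          ∑ j, ∑ k, A j k * u (Fin.cons j K) * (starRingEnd ℂ) (u (Fin.cons k K))).re -
        ∑ J ∈ univ.filter (fun J : Fin (p + 1) → Fin n => StrictMono J),
          (∑ j ∈ I, (A j j).re) * normSq (u J) := by
  have hAjj : ∀ j, (0 : ℂ) ≤ A j j := fun j => by
    have := hA.dotProduct_mulVec_nonneg (Pi.single j 1)
    simpa [Matrix.mulVec_single, dotProduct, Pi.single_apply, apply_ite] using this
  have haim : ∀ j, (A j j).im = 0 := fun j => ((Complex.le_def.mp (hAjj j)).2).symm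
  have ha0 : ∀ j, 0 ≤ (A j j).re := fun j => (Complex.le_def.mp (hAjj j)).1
  -- Step 1 : compute the real part of the first sum
  have step1 : (∑ K ∈ univ.filter (fun K : Fin p → Fin n => StrictMono K),
        ∑ j, ∑ k, A j k * u (Fin.cons j K) * (starRingEnd ℂ) (u (Fin.cons k K))).re
      = ∑ K ∈ univ.filter (fun K : Fin p → Fin n => StrictMono K),
        ∑ j, (A j j).re * normSq (u (Fin.cons j K)) := by
    rw [Complex.re_sum]
    refine Finset.sum_congr rfl fun K _ => ?_
    rw [Complex.re_sum]
    refine Finset.sum_congr rfl fun j _ => ?_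
    rw [Finset.sum_eq_single j
      (fun k _ hk => by rw [hdiag j k (Ne.symm hk), zero_mul, zero_mul])
      (by intro h; exact absurd (mem_univ j) h)]
    rw [mul_assoc, Complex.mul_conj, Complex.mul_re, haim j]
    simp
  rw [step1]
  -- Step 2 : reindex the first sum over strictly monotone (p+1)-tuples
  have hmain : ∑ K ∈ univ.filter (fun K : Fin p → Fin n => StrictMono K),
        ∑ j, (A j j).re * normSq (u (Fin.cons j K))
      = ∑ J ∈ univ.filter (fun J : Fin (p + 1) → Fin n => StrictMono J),
        ∑ i : Fin (p + 1), (A (J i) (J i)).re * normSq (u J) := by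
    have hrestrict : ∀ K ∈ univ.filter (fun K : Fin p → Fin n => StrictMono K),
        ∑ j, (A j j).re * normSq (u (Fin.cons j K))
        = ∑ j ∈ univ.filter (fun j => j ∉ image K univ),
            (A j j).re * normSq (u (Fin.cons j K)) := by
      intro K _
      symm
      apply Finset.sum_subset (filter_subset _ _)
      intro j _ hj
      simp only [mem_filter, mem_univ, true_and, not_not] at hj
      obtain ⟨i, _, hi⟩ := mem_image.mp hj
      have hni : ¬ Function.Injective (Fin.cons j K) := by
        intro hinj
        have h0 : (@Fin.cons p (fun _ => Fin n) j K) i.succ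
            = (@Fin.cons p (fun _ => Fin n) j K) 0 := by
          simp [hi]
        exact Fin.succ_ne_zero i (hinj h0)
      rw [antisymm_vanish hu hni, normSq_zero, mul_zero]
    rw [Finset.sum_congr rfl hrestrict, Finset.sum_sigma', Finset.sum_sigma']
    refine Finset.sum_nbij'
      (fun x => ⟨Fin.cons x.2 x.1 ∘ Tuple.sort (Fin.cons x.2 x.1),
        (Tuple.sort (Fin.cons x.2 x.1)).symm 0⟩)
      (fun y => ⟨Fin.removeNth y.2 y.1, y.1 y.2⟩) ?_ ?_ ?_ ?_ ?_
    · rintro ⟨K, j⟩ hx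
      simp only [mem_sigma, mem_filter, mem_univ, true_and, and_true] at hx ⊢
      obtain ⟨hK, hj⟩ := hx
      have hfin : Function.Injective (Fin.cons j K) :=
        cons_injective hK.injective (fun i hKi => hj (mem_image.mpr ⟨i, mem_univ i, hKi⟩))
      exact (Tuple.monotone_sort _).strictMono_of_injective
        (hfin.comp (Equiv.injective _))
    · rintro ⟨J, i⟩ hy
      simp only [mem_sigma, mem_filter, mem_univ, true_and, and_true] at hy ⊢
      constructor
      · exact hy.comp (Fin.strictMono_succAbove i)
      · intro hmem
        obtain ⟨k, _, hk⟩ := mem_image.mp hmem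
        exact Fin.succAbove_ne i k (hy.injective hk)
    · rintro ⟨K, j⟩ hx
      dsimp only
      simp only [mem_sigma, mem_filter, mem_univ, true_and] at hx
      obtain ⟨hK, hj⟩ := hx
      have hfin : Function.Injective (Fin.cons j K) :=
        cons_injective hK.injective (fun i hKi => hj (mem_image.mpr ⟨i, mem_univ i, hKi⟩))
      set f := @Fin.cons p (fun _ => Fin n) j K with hf
      set σ := Tuple.sort f with hσ
      have hJ0 : (f ∘ σ) (σ.symm 0) = j := by
        simp [Function.comp, Equiv.apply_symm_apply, hf]
      have hJsm : StrictMono (f ∘ σ) :=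
        (Tuple.monotone_sort _).strictMono_of_injective (hfin.comp (Equiv.injective _))
      have hinjJ : Function.Injective (f ∘ σ) := hJsm.injective
      have hrm : Fin.removeNth (σ.symm 0) (f ∘ σ) = K := by
        refine strictMono_eq_of_image_eq (hJsm.comp (Fin.strictMono_succAbove _)) hK ?_
        have h1 := image_removeNth hinjJ (σ.symm 0)
        rw [show (Fin.removeNth (σ.symm 0) (f ∘ σ) : Fin p → Fin n)
            = (f ∘ σ) ∘ (σ.symm 0).succAbove from rfl] at h1 ⊢
        rw [h1, hJ0, image_comp_perm, hf, image_cons,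
          Finset.erase_insert (by simpa using hj)]
      exact Sigma.ext hrm (heq_of_eq hJ0)
    · rintro ⟨J, i⟩ hy
      dsimp only
      simp only [mem_sigma, mem_filter, mem_univ, true_and, and_true] at hy
      have hKi : ∀ k, Fin.removeNth i J k ≠ J i :=
        fun k hk => Fin.succAbove_ne i k (hy.injective hk)
      have hKinj : Function.Injective (Fin.removeNth i J) :=
        fun x y h => (Fin.strictMono_succAbove i).injective (hy.injective h)
      set f := @Fin.cons p (fun _ => Fin n) (J i) (Fin.removeNth i J) with hf
      have hfin : Function.Injective f := cons_injective hKinj hKi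
      set σ := Tuple.sort f with hσ
      have himg : image f univ = image J univ := by
        rw [hf, image_cons, image_removeNth hy.injective i,
          Finset.insert_erase (mem_image.mpr ⟨i, mem_univ i, rfl⟩)]
      have hJeq : f ∘ σ = J := by
        refine strictMono_eq_of_image_eq
          ((Tuple.monotone_sort _).strictMono_of_injective (hfin.comp (Equiv.injective _)))
          hy ?_
        rw [image_comp_perm, himg]
      have hieq : σ.symm 0 = i := by
        apply hy.injective
        have h1 : J (σ.symm 0) = f 0 := by
          conv_lhs => rw [← hJeq]
          simp
        rw [h1, hf, Fin.cons_zero]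
      exact Sigma.ext hJeq (heq_of_eq hieq)
    · rintro ⟨K, j⟩ hx
      dsimp only
      simp only [mem_sigma, mem_filter, mem_univ, true_and] at hx
      obtain ⟨hK, hj⟩ := hx
      have hJ0 : (Fin.cons j K ∘ Tuple.sort (Fin.cons j K))
          ((Tuple.sort (Fin.cons j K)).symm 0) = j := by
        simp [Function.comp, Equiv.apply_symm_apply]
      rw [hJ0, normSq_perm hu]
  rw [hmain, ← Finset.sum_sub_distrib]
  apply Finset.sum_nonneg
  intro J hJ
  simp only [mem_filter, mem_univ, true_and] at hJ
  rw [← Finset.sum_mul, sub_nonneg]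
  apply mul_le_mul_of_nonneg_right _ (normSq_nonneg _)
  have himg : ∑ i : Fin (p + 1), (A (J i) (J i)).re
      = ∑ t ∈ image J univ, (A t t).re := by
    rw [Finset.sum_image (fun x _ y _ h => hJ.injective h)]
  rw [himg]
  apply key_sets _ ha0 _ _ hsmall
  rw [hcard, Finset.card_image_of_injective _ hJ.injective, card_univ, Fintype.card_fin]
  omega
end

section
/- Let A be an n × n Hermitian matrix, 1 ≤ q ≤ n − 1, and M > 0. If ∑'_{|K|=q-1} ∑_{j,k} A_{jk} w_{jK}\overline{w_{kK}} ≥ M ∑'_{|J|=q}|w_J|² for all antisymmetric (0,q)-arrays w, then the (q)-th smallest eigenvalue of A is strictly positive, and the same inequality holds at level q + 1: ∑'_{|K|=q} ∑_{j,k} A_{jk} w_{jK}\overline{w_{kK}} ≥ M ∑'_{|J|=q+1}|w_J|² for all antisymmetric (0,q+1)-arrays w. -/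
open Finset Complex

namespace Stmt14Aux

open Matrix


lemma antisymm_zero {n r : ℕ} {w : (Fin r → Fin n) → ℂ} (hw : IsAntisymmArray w)
    {J : Fin r → Fin n} (hJ : ¬ Function.Injective J) : w J = 0 := by
  simp only [Function.Injective, not_forall] at hJ
  obtain ⟨a, b, hab, hne⟩ := hJ
  have h1 := hw J (Equiv.swap a b)
  have h2 : J ∘ (Equiv.swap a b) = J := by
    funext i
    simp only [Function.comp_apply]
    rcases eq_or_ne i a with rfl | hia
    · rw [Equiv.swap_apply_left]; exact hab.symm
    rcases eq_or_ne i b with rfl | hib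
    · rw [Equiv.swap_apply_right]; exact hab
    · rw [Equiv.swap_apply_of_ne_of_ne hia hib]
  rw [h2, Equiv.Perm.sign_swap hne] at h1
  have : (2 : ℂ) * w J = 0 := by
    have h1' : w J = - w J := by simpa using h1
    linear_combination h1'
  simpa using this

lemma sum_eq_factorial_smul {n r : ℕ} {M : Type*} [AddCommMonoid M]
    [DecidablePred (fun J : Fin r → Fin n => StrictMono J)]
    (f : (Fin r → Fin n) → M)
    (hinv : ∀ (J : Fin r → Fin n) (σ : Equiv.Perm (Fin r)), f (J ∘ σ) = f J)
    (hz : ∀ J : Fin r → Fin n, ¬ Function.Injective J → f J = 0) :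
    ∑ J : Fin r → Fin n, f J
      = r.factorial • ∑ J ∈ univ.filter (fun J : Fin r → Fin n => StrictMono J), f J := by
  classical
  have step1 : ∑ J : Fin r → Fin n, f J
      = ∑ J ∈ univ.filter (fun J : Fin r → Fin n => Function.Injective J), f J := by
    rw [← Finset.sum_filter_add_sum_filter_not univ (fun J => Function.Injective J) f]
    have hzero : ∑ J ∈ univ.filter (fun J : Fin r → Fin n => ¬ Function.Injective J), f J = 0 :=
      Finset.sum_eq_zero (fun J hJ => hz J (by simpa using (Finset.mem_filter.mp hJ).2))
    rw [hzero, add_zero]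
  rw [step1]
  have step2 : ∑ J ∈ univ.filter (fun J : Fin r → Fin n => Function.Injective J), f J
      = ∑ x ∈ (univ.filter (fun L : Fin r → Fin n => StrictMono L)) ×ˢ
          (univ : Finset (Equiv.Perm (Fin r))), f (x.1 ∘ x.2) := by
    refine Finset.sum_nbij' (fun J => (J ∘ Tuple.sort J, (Tuple.sort J)⁻¹))
      (fun x => x.1 ∘ x.2) ?_ ?_ ?_ ?_ ?_
    · intro J hJ
      have hJi : Function.Injective J := by simpa using (Finset.mem_filter.mp hJ).2
      simp only [Finset.mem_product, Finset.mem_filter, Finset.mem_univ, true_and, and_true]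
      exact (Tuple.monotone_sort J).strictMono_of_injective
        (hJi.comp (Tuple.sort J).injective)
    · intro x hx
      simp only [Finset.mem_product, Finset.mem_filter, Finset.mem_univ, true_and] at hx
      simp only [Finset.mem_filter, Finset.mem_univ, true_and]
      exact hx.1.injective.comp x.2.injective
    · intro J hJ
      funext i
      simp
    · intro x hx
      simp only [Finset.mem_product, Finset.mem_filter, Finset.mem_univ, true_and] at hx
      obtain ⟨L, σ⟩ := x
      have hL : StrictMono L := hx.1
      have hinj : Function.Injective (L ∘ σ) := hL.injective.comp σ.injective
      set π := Tuple.sort (L ∘ σ) with hπ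
      have hsm : StrictMono ((L ∘ σ) ∘ π) :=
        (Tuple.monotone_sort (L ∘ σ)).strictMono_of_injective (hinj.comp π.injective)
      have hrange : Set.range ((L ∘ σ) ∘ π) = Set.range L := by
        rw [π.surjective.range_comp (L ∘ σ), σ.surjective.range_comp L]
      haveI : WellFoundedLT (Fin r) := inferInstance
      have hLe : (L ∘ σ) ∘ π = L := (hsm.range_inj hL).mp hrange
      have hid : σ ∘ π = id := by
        funext i
        apply hL.injective
        have := congrFun hLe i
        simpa [Function.comp] using this
      have hπσ : π = σ⁻¹ := by
        refine Equiv.ext fun i => ?_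
        have h2 : σ (π i) = i := congrFun hid i
        apply σ.injective
        simp [h2]
      simp only [Prod.mk.injEq]
      constructor
      · rw [hLe]
      · rw [hπσ, inv_inv]
    · intro J hJ
      have hc : ((J ∘ (Tuple.sort J : Equiv.Perm (Fin r))) ∘
          ((Tuple.sort J)⁻¹ : Equiv.Perm (Fin r))) = J := by
        funext i; simp
      simp only [hc]
  rw [step2]
  have : ∀ x ∈ (univ.filter (fun L : Fin r → Fin n => StrictMono L)) ×ˢ
      (univ : Finset (Equiv.Perm (Fin r))), f (x.1 ∘ x.2) = f x.1 :=
    fun x _ => hinv _ _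
  rw [Finset.sum_congr rfl this, Finset.sum_product, Finset.sum_comm]
  simp [Finset.sum_const, Finset.card_univ, Fintype.card_perm, Fintype.card_fin]



lemma cons_comp {n r : ℕ} (j : Fin n) (K : Fin r → Fin n) (σ : Equiv.Perm (Fin r)) :
    Fin.cons j (K ∘ σ) = (Fin.cons j K : Fin (r+1) → Fin n) ∘
      (σ.viaFintypeEmbedding (Fin.succEmb r)) := by
  funext i
  refine Fin.cases ?_ (fun i => ?_) i
  · have h0 : (σ.viaFintypeEmbedding (Fin.succEmb r)) 0 = 0 := by
      apply Equiv.Perm.viaFintypeEmbedding_apply_notMem_range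
      rintro ⟨x, hx⟩
      exact (Fin.succ_ne_zero x) (by simpa [Fin.succEmb] using hx)
    simp [h0]
  · have h1 := Equiv.Perm.viaFintypeEmbedding_apply_image σ (Fin.succEmb r) i
    simp only [Function.comp_apply, Fin.cons_succ]
    rw [show ((σ.viaFintypeEmbedding (Fin.succEmb r)) i.succ) = (σ i).succ from h1]
    simp

lemma snoc_comp {n r : ℕ} (m : Fin n) (K : Fin r → Fin n) (σ : Equiv.Perm (Fin r)) :
    Fin.snoc (K ∘ σ) m = (Fin.snoc K m : Fin (r+1) → Fin n) ∘
      (σ.viaFintypeEmbedding (Fin.castSuccEmb)) := by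
  funext i
  refine Fin.lastCases ?_ (fun i => ?_) i
  · have h0 : (σ.viaFintypeEmbedding Fin.castSuccEmb) (Fin.last r) = Fin.last r := by
      apply Equiv.Perm.viaFintypeEmbedding_apply_notMem_range
      rintro ⟨x, hx⟩
      have : (Fin.castSucc x) = Fin.last r := hx
      exact (Fin.castSucc_lt_last x).ne this
    simp [h0]
  · have h1 := Equiv.Perm.viaFintypeEmbedding_apply_image σ Fin.castSuccEmb i
    simp only [Fin.castSuccEmb, Fin.castAddEmb, Function.Embedding.coeFn_mk] at h1
    simp only [Function.comp_apply, Fin.snoc_castSucc]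
    rw [show ((σ.viaFintypeEmbedding Fin.castSuccEmb) (Fin.castSucc i)) = Fin.castSucc (σ i)
      from h1]
    simp

lemma snoc_cons {n r : ℕ} (j m : Fin n) (K : Fin r → Fin n) :
    (Fin.snoc (Fin.cons j K : Fin (r+1) → Fin n) m : Fin (r+2) → Fin n)
      = Fin.cons j (Fin.snoc K m) := by
  funext i
  refine Fin.lastCases ?_ (fun i => ?_) i
  · rw [Fin.snoc_last, show (Fin.last (r+1)) = Fin.succ (Fin.last r) from (Fin.succ_last r).symm,
      Fin.cons_succ, Fin.snoc_last]
  · rw [Fin.snoc_castSucc]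
    refine Fin.cases ?_ (fun i' => ?_) i
    · simp
    · rw [Fin.cons_succ, show Fin.castSucc (Fin.succ i') = Fin.succ (Fin.castSucc i') from
        (Fin.succ_castSucc i').symm, Fin.cons_succ, Fin.snoc_castSucc]

lemma cons_not_inj {n r : ℕ} {K : Fin r → Fin n} (hK : ¬ Function.Injective K) (j : Fin n) :
    ¬ Function.Injective (Fin.cons j K : Fin (r+1) → Fin n) := by
  intro hinj
  exact hK (fun a b hab => Fin.succ_injective _ (hinj (by simpa using hab)))

lemma snoc_not_inj {n r : ℕ} {K : Fin r → Fin n} (hK : ¬ Function.Injective K) (m : Fin n) :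
    ¬ Function.Injective (Fin.snoc K m : Fin (r+1) → Fin n) := by
  intro hinj
  refine hK (fun a b hab => ?_)
  have : Fin.castSucc a = Fin.castSucc b := hinj (by simpa using hab)
  exact Fin.castSucc_injective _ this



lemma sum_prod_swap {n r : ℕ} (F : Fin r → Fin n → ℂ) :
    ∑ J : Fin r → Fin n, ∏ b, F b (J b) = ∏ b, ∑ j, F b j := by
  calc ∑ J : Fin r → Fin n, ∏ b, F b (J b)
      = ∑ J ∈ Fintype.piFinset (fun _ : Fin r => (univ : Finset (Fin n))), ∏ b, F b (J b) := by
        rw [Fintype.piFinset_univ]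
    _ = ∏ b, ∑ j, F b j := (Finset.prod_univ_sum _ _).symm

lemma swap4 {α β γ δ : Type*} [Fintype α] [Fintype β] [Fintype γ] [Fintype δ]
    (f : α → β → γ → δ → ℂ) :
    ∑ a : α, ∑ b : β, ∑ c : γ, ∑ d : δ, f a b c d
      = ∑ c : γ, ∑ d : δ, ∑ a : α, ∑ b : β, f a b c d :=
  calc ∑ a : α, ∑ b : β, ∑ c : γ, ∑ d : δ, f a b c d
      = ∑ a : α, ∑ c : γ, ∑ b : β, ∑ d : δ, f a b c d :=
        Finset.sum_congr rfl fun a _ => Finset.sum_comm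
    _ = ∑ c : γ, ∑ a : α, ∑ b : β, ∑ d : δ, f a b c d := Finset.sum_comm
    _ = ∑ c : γ, ∑ a : α, ∑ d : δ, ∑ b : β, f a b c d :=
        Finset.sum_congr rfl fun c _ => Finset.sum_congr rfl fun a _ => Finset.sum_comm
    _ = ∑ c : γ, ∑ d : δ, ∑ a : α, ∑ b : β, f a b c d :=
        Finset.sum_congr rfl fun c _ => Finset.sum_comm

lemma prod_ite_perm {r : ℕ} (τ ρ : Equiv.Perm (Fin r)) :
    (∏ b : Fin r, if τ b = ρ b then (1:ℂ) else 0) = if τ = ρ then 1 else 0 := by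
  by_cases h : τ = ρ
  · subst h; simp
  · rw [if_neg h]
    obtain ⟨b, hb⟩ : ∃ b, τ b ≠ ρ b := by
      by_contra hc; push_neg at hc; exact h (Equiv.ext hc)
    exact Finset.prod_eq_zero (Finset.mem_univ b) (if_neg hb)

lemma sign_sq {r : ℕ} (τ : Equiv.Perm (Fin r)) :
    ((Equiv.Perm.sign τ : ℤ) : ℂ) * ((Equiv.Perm.sign τ : ℤ) : ℂ) = 1 := by
  rcases Int.units_eq_one_or (Equiv.Perm.sign τ) with h | h <;> simp [h]

lemma conj_sign {r : ℕ} (τ : Equiv.Perm (Fin r)) :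
    (starRingEnd ℂ) ((Equiv.Perm.sign τ : ℤ) : ℂ) = ((Equiv.Perm.sign τ : ℤ) : ℂ) :=
  map_intCast _ _



/-- value pairs are invariant under a common permutation -/
lemma pair_inv {n r : ℕ} {w : (Fin r → Fin n) → ℂ} (hw : IsAntisymmArray w)
    (u v : Fin r → Fin n) (σ : Equiv.Perm (Fin r)) (c : ℂ) :
    c * w (u ∘ σ) * (starRingEnd ℂ) (w (v ∘ σ)) = c * w u * (starRingEnd ℂ) (w v) := by
  rw [hw u σ, hw v σ]
  rcases Int.units_eq_one_or (Equiv.Perm.sign σ) with hs | hs <;>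
    simp [hs, zsmul_eq_mul] <;> ring

lemma normSq_antisymm {n r : ℕ} {w : (Fin r → Fin n) → ℂ} (hw : IsAntisymmArray w)
    (J : Fin r → Fin n) (σ : Equiv.Perm (Fin r)) : normSq (w (J ∘ σ)) = normSq (w J) := by
  rw [hw J σ]
  rcases Int.units_eq_one_or (Equiv.Perm.sign σ) with hs | hs <;> simp [hs, zsmul_eq_mul]

/-- the snoc-restriction of an antisymmetric array is antisymmetric -/
lemma snoc_antisymm {n r : ℕ} {w : (Fin (r+1) → Fin n) → ℂ} (hw : IsAntisymmArray w)
    (m : Fin n) : IsAntisymmArray (fun K : Fin r → Fin n => w (Fin.snoc K m)) := by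
  intro K σ
  simp only
  rw [snoc_comp, hw _ (σ.viaFintypeEmbedding Fin.castSuccEmb),
    Equiv.Perm.viaFintypeEmbedding_sign]

noncomputable def QF {n r : ℕ} (A : Matrix (Fin n) (Fin n) ℂ) (w : (Fin (r+1) → Fin n) → ℂ)
    (K : Fin r → Fin n) : ℂ :=
  ∑ j, ∑ k, A j k * w (Fin.cons j K) * (starRingEnd ℂ) (w (Fin.cons k K))

lemma QF_comp {n r : ℕ} (A : Matrix (Fin n) (Fin n) ℂ) {w : (Fin (r+1) → Fin n) → ℂ}
    (hw : IsAntisymmArray w) (K : Fin r → Fin n) (σ : Equiv.Perm (Fin r)) :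
    QF A w (K ∘ σ) = QF A w K := by
  unfold QF
  refine Finset.sum_congr rfl fun j _ => Finset.sum_congr rfl fun k _ => ?_
  rw [cons_comp j K σ, cons_comp k K σ, pair_inv hw]

lemma QF_zero {n r : ℕ} (A : Matrix (Fin n) (Fin n) ℂ) {w : (Fin (r+1) → Fin n) → ℂ}
    (hw : IsAntisymmArray w) {K : Fin r → Fin n} (hK : ¬ Function.Injective K) :
    QF A w K = 0 := by
  unfold QF
  refine Finset.sum_eq_zero fun j _ => Finset.sum_eq_zero fun k _ => ?_
  rw [antisymm_zero hw (cons_not_inj hK j)]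
  ring



lemma sum_snoc {n r : ℕ} {M : Type*} [AddCommMonoid M] (g : (Fin (r+1) → Fin n) → M) :
    ∑ L : Fin (r+1) → Fin n, g L = ∑ m : Fin n, ∑ K : Fin r → Fin n, g (Fin.snoc K m) := by
  calc ∑ L : Fin (r+1) → Fin n, g L
      = ∑ x : Fin n × (Fin r → Fin n), g (Fin.snocEquiv (fun _ => Fin n) x) :=
        ((Fin.snocEquiv (fun _ => Fin n)).sum_comp g).symm
    _ = ∑ m : Fin n, ∑ K : Fin r → Fin n, g (Fin.snoc K m) := Fintype.sum_prod_type _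

lemma QF_snoc {n r : ℕ} (A : Matrix (Fin n) (Fin n) ℂ) (w : (Fin (r+2) → Fin n) → ℂ)
    (m : Fin n) (K : Fin r → Fin n) :
    QF A (fun L : Fin (r+1) → Fin n => w (Fin.snoc L m)) K = QF A w (Fin.snoc K m) := by
  unfold QF
  refine Finset.sum_congr rfl fun j _ => Finset.sum_congr rfl fun k _ => ?_
  simp only [snoc_cons]

lemma part2 {n p : ℕ} (A : Matrix (Fin n) (Fin n) ℂ) (M : ℝ) (hM : 0 < M)
    [DecidablePred (fun J : Fin p → Fin n => StrictMono J)]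
    [DecidablePred (fun J : Fin (p+1) → Fin n => StrictMono J)]
    [DecidablePred (fun J : Fin (p+2) → Fin n => StrictMono J)]
    (h : ∀ w : (Fin (p + 1) → Fin n) → ℂ, IsAntisymmArray w →
      M * ∑ J ∈ univ.filter (fun J : Fin (p + 1) → Fin n => StrictMono J), normSq (w J) ≤
        (∑ K ∈ univ.filter (fun K : Fin p → Fin n => StrictMono K), QF A w K).re)
    (w : (Fin (p + 2) → Fin n) → ℂ) (hw : IsAntisymmArray w) :
    M * ∑ J ∈ univ.filter (fun J : Fin (p + 2) → Fin n => StrictMono J), normSq (w J) ≤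
      (∑ K ∈ univ.filter (fun K : Fin (p + 1) → Fin n => StrictMono K), QF A w K).re := by
  set Y : ℝ := ∑ J ∈ univ.filter (fun J : Fin (p + 2) → Fin n => StrictMono J), normSq (w J)
    with hY
  set R : ℂ := ∑ K ∈ univ.filter (fun K : Fin (p + 1) → Fin n => StrictMono K), QF A w K
    with hR
  have hY0 : 0 ≤ Y := Finset.sum_nonneg fun J _ => normSq_nonneg _
  -- norm side
  have key1 : ∑ m : Fin n, ∑ J ∈ univ.filter (fun J : Fin (p+1) → Fin n => StrictMono J),
      normSq (w (Fin.snoc J m)) = (p + 2 : ℝ) * Y := by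
    have b : ∑ L : Fin (p+2) → Fin n, normSq (w L)
        = ∑ m : Fin n, ∑ J : Fin (p+1) → Fin n, normSq (w (Fin.snoc J m)) := sum_snoc _
    have c : ∑ L : Fin (p+2) → Fin n, normSq (w L) = (p+2).factorial • Y := by
      rw [hY]
      exact sum_eq_factorial_smul _ (fun J σ => normSq_antisymm hw J σ)
        (fun J hJ => by rw [antisymm_zero hw hJ]; simp)
    have a : ∀ m : Fin n, ∑ J : Fin (p+1) → Fin n, normSq (w (Fin.snoc J m))
        = (p+1).factorial • ∑ J ∈ univ.filter (fun J : Fin (p+1) → Fin n => StrictMono J),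
            normSq (w (Fin.snoc J m)) := by
      intro m
      exact sum_eq_factorial_smul _ (fun J σ => normSq_antisymm (snoc_antisymm hw m) J σ)
        (fun J hJ => by rw [antisymm_zero (snoc_antisymm hw m) hJ]; simp)
    have : (p+2).factorial • Y
        = ∑ m : Fin n, (p+1).factorial • ∑ J ∈ univ.filter
            (fun J : Fin (p+1) → Fin n => StrictMono J), normSq (w (Fin.snoc J m)) := by
      rw [← c, b]
      exact Finset.sum_congr rfl fun m _ => a m
    rw [← Finset.smul_sum] at this
    have hfac : ((p+2).factorial : ℝ) = (p+2) * ((p+1).factorial : ℝ) := by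
      rw [show p + 2 = (p+1) + 1 from rfl, Nat.factorial_succ]
      push_cast; ring
    have hne : ((p+1).factorial : ℝ) ≠ 0 := by positivity
    have := this.symm
    rw [nsmul_eq_mul, nsmul_eq_mul] at this
    refine mul_left_cancel₀ hne ?_
    rw [this, hfac]; ring
  -- form side
  have key2 : ∑ m : Fin n, ∑ K ∈ univ.filter (fun K : Fin p → Fin n => StrictMono K),
      QF A w (Fin.snoc K m) = ((p:ℂ) + 1) * R := by
    have b : ∑ L : Fin (p+1) → Fin n, QF A w L
        = ∑ m : Fin n, ∑ K : Fin p → Fin n, QF A w (Fin.snoc K m) := sum_snoc _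
    have c : ∑ L : Fin (p+1) → Fin n, QF A w L = (p+1).factorial • R := by
      rw [hR]
      exact sum_eq_factorial_smul _ (fun K σ => QF_comp A hw K σ) (fun K hK => QF_zero A hw hK)
    have a : ∀ m : Fin n, ∑ K : Fin p → Fin n, QF A w (Fin.snoc K m)
        = p.factorial • ∑ K ∈ univ.filter (fun K : Fin p → Fin n => StrictMono K),
            QF A w (Fin.snoc K m) := by
      intro m
      refine sum_eq_factorial_smul _ (fun K σ => ?_) (fun K hK => QF_zero A hw (snoc_not_inj hK m))
      rw [snoc_comp, QF_comp A hw]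
    have hsum : (p+1).factorial • R = p.factorial • ∑ m : Fin n, ∑ K ∈ univ.filter
        (fun K : Fin p → Fin n => StrictMono K), QF A w (Fin.snoc K m) := by
      rw [← c, b, Finset.smul_sum]
      exact Finset.sum_congr rfl fun m _ => a m
    have hne : ((p).factorial : ℂ) ≠ 0 := Nat.cast_ne_zero.mpr (Nat.factorial_ne_zero p)
    refine mul_left_cancel₀ hne ?_
    rw [nsmul_eq_mul, nsmul_eq_mul] at hsum
    rw [← hsum, Nat.factorial_succ]
    push_cast
    ring
  have happ : ∀ m : Fin n,
      M * ∑ J ∈ univ.filter (fun J : Fin (p+1) → Fin n => StrictMono J),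
          normSq (w (Fin.snoc J m))
        ≤ (∑ K ∈ univ.filter (fun K : Fin p → Fin n => StrictMono K),
            QF A w (Fin.snoc K m)).re := by
    intro m
    have := h (fun L => w (Fin.snoc L m)) (snoc_antisymm hw m)
    simpa only [QF_snoc] using this
  have hsumle : M * ∑ m : Fin n, (∑ J ∈ univ.filter
        (fun J : Fin (p+1) → Fin n => StrictMono J), normSq (w (Fin.snoc J m)))
      ≤ ∑ m : Fin n, (∑ K ∈ univ.filter (fun K : Fin p → Fin n => StrictMono K),
          QF A w (Fin.snoc K m)).re := by
    rw [Finset.mul_sum]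
    exact Finset.sum_le_sum fun m _ => happ m
  rw [key1] at hsumle
  have hre : ∑ m : Fin n, (∑ K ∈ univ.filter (fun K : Fin p → Fin n => StrictMono K),
      QF A w (Fin.snoc K m)).re = ((p:ℝ) + 1) * R.re := by
    rw [← Complex.re_sum, key2]
    simp [Complex.mul_re]
  rw [hre] at hsumle
  have hp1 : (0:ℝ) < (p:ℝ) + 1 := by positivity
  nlinarith [mul_nonneg hM.le hY0, hsumle, hp1]




section setup
variable {n p : ℕ} (hle : p + 1 ≤ n) (A : Matrix (Fin n) (Fin n) ℂ)
  (hA : A.IsHermitian) (σ₀ : Equiv.Perm (Fin n))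

/-- the selected eigenvector index family -/
def ι (a : Fin (p+1)) : Fin n := σ₀ (Fin.castLE hle a)

/-- conjugated eigenvectors -/
noncomputable def xv (a : Fin (p+1)) (j : Fin n) : ℂ :=
  (starRingEnd ℂ) (hA.eigenvectorBasis (ι hle σ₀ a) j)

noncomputable def lam (a : Fin (p+1)) : ℝ := hA.eigenvalues (ι hle σ₀ a)

lemma hG (a b : Fin (p+1)) :
    ∑ j, xv hle A hA σ₀ a j * (starRingEnd ℂ) (xv hle A hA σ₀ b j)
      = if a = b then 1 else 0 := by
  have horth := hA.eigenvectorBasis.orthonormal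
  have h1 := orthonormal_iff_ite.mp horth (ι hle σ₀ a) (ι hle σ₀ b)
  rw [PiLp.inner_apply] at h1
  simp only [RCLike.inner_apply] at h1
  have h2 : ∑ j, xv hle A hA σ₀ a j * (starRingEnd ℂ) (xv hle A hA σ₀ b j)
      = ∑ j, (starRingEnd ℂ) (hA.eigenvectorBasis (ι hle σ₀ a) j)
          * hA.eigenvectorBasis (ι hle σ₀ b) j := by
    refine Finset.sum_congr rfl fun j _ => ?_
    simp only [xv, RingHomCompTriple.comp_apply, RingHom.id_apply, Complex.conj_conj]
  rw [h2]
  simp_rw [mul_comm ((starRingEnd ℂ) _)]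
  rw [h1]
  have hinj : Function.Injective (ι hle σ₀) := fun a b hab =>
    Fin.castLE_injective hle (σ₀.injective hab)
  by_cases hab : a = b
  · simp [hab]
  · rw [if_neg (fun hc => hab (hinj hc)), if_neg hab]

lemma hH (a : Fin (p+1)) (k : Fin n) :
    ∑ j, A j k * xv hle A hA σ₀ a j = ((lam hle A hA σ₀ a : ℝ) : ℂ) * xv hle A hA σ₀ a k := by
  have hev := hA.mulVec_eigenvectorBasis (ι hle σ₀ a)
  have hk := congrFun hev k
  have hmv : (A *ᵥ ⇑(hA.eigenvectorBasis (ι hle σ₀ a))) k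
      = ∑ j, A k j * hA.eigenvectorBasis (ι hle σ₀ a) j := by
    simp [Matrix.mulVec, dotProduct]
  have hk' : ∑ j, A k j * hA.eigenvectorBasis (ι hle σ₀ a) j
      = ((hA.eigenvalues (ι hle σ₀ a) : ℝ) : ℂ) * hA.eigenvectorBasis (ι hle σ₀ a) k := by
    rw [← hmv, hk]
    simp [Complex.real_smul]
  calc ∑ j, A j k * xv hle A hA σ₀ a j
      = (starRingEnd ℂ) (∑ j, A k j * hA.eigenvectorBasis (ι hle σ₀ a) j) := by
        rw [map_sum]
        refine Finset.sum_congr rfl fun j _ => ?_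
        rw [_root_.map_mul]
        have hconj : (starRingEnd ℂ) (A k j) = A j k := by
          have := congrFun (congrFun hA j) k
          simpa [Matrix.conjTranspose_apply] using this
        rw [hconj, xv]
    _ = ((lam hle A hA σ₀ a : ℝ) : ℂ) * xv hle A hA σ₀ a k := by
        rw [hk', _root_.map_mul, Complex.conj_ofReal]
        rfl

/-- the Slater determinant test array -/
noncomputable def wS (J : Fin (p+1) → Fin n) : ℂ :=
  Matrix.det (Matrix.of fun a b : Fin (p+1) => xv hle A hA σ₀ a (J b))

lemma wS_antisymm : IsAntisymmArray (wS hle A hA σ₀) := by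
  intro J σ
  show Matrix.det _ = _
  rw [show (Matrix.of fun a b : Fin (p+1) => xv hle A hA σ₀ a ((J ∘ σ) b))
      = (Matrix.of fun a b : Fin (p+1) => xv hle A hA σ₀ a (J b)).submatrix id σ from rfl,
    Matrix.det_permute']
  rw [zsmul_eq_mul]
  norm_cast

lemma wS_det (J : Fin (p+1) → Fin n) :
    wS hle A hA σ₀ J = ∑ τ : Equiv.Perm (Fin (p+1)),
      ((Equiv.Perm.sign τ : ℤ) : ℂ) * ∏ b, xv hle A hA σ₀ (τ b) (J b) := by
  rw [wS, Matrix.det_apply]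
  refine Finset.sum_congr rfl fun τ _ => ?_
  rw [Units.smul_def, zsmul_eq_mul]
  rfl


lemma S_eq :
    ∑ J : Fin (p+1) → Fin n, wS hle A hA σ₀ J * (starRingEnd ℂ) (wS hle A hA σ₀ J)
      = ((p+1).factorial : ℂ) := by
  set x := xv hle A hA σ₀ with hxdef
  have e1 : ∀ J : Fin (p+1) → Fin n, wS hle A hA σ₀ J * (starRingEnd ℂ) (wS hle A hA σ₀ J)
      = ∑ τ : Equiv.Perm (Fin (p+1)), ∑ ρ : Equiv.Perm (Fin (p+1)),
          (((Equiv.Perm.sign τ : ℤ) : ℂ) * ((Equiv.Perm.sign ρ : ℤ) : ℂ)) *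
            ∏ b, (x (τ b) (J b) * (starRingEnd ℂ) (x (ρ b) (J b))) := by
    intro J
    rw [wS_det, map_sum, Finset.sum_mul_sum]
    refine Finset.sum_congr rfl fun τ _ => Finset.sum_congr rfl fun ρ _ => ?_
    rw [_root_.map_mul, map_prod, conj_sign, Finset.prod_mul_distrib]
    ring
  calc ∑ J : Fin (p+1) → Fin n, wS hle A hA σ₀ J * (starRingEnd ℂ) (wS hle A hA σ₀ J)
      = ∑ J : Fin (p+1) → Fin n, ∑ τ : Equiv.Perm (Fin (p+1)), ∑ ρ : Equiv.Perm (Fin (p+1)),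
          (((Equiv.Perm.sign τ : ℤ) : ℂ) * ((Equiv.Perm.sign ρ : ℤ) : ℂ)) *
            ∏ b, (x (τ b) (J b) * (starRingEnd ℂ) (x (ρ b) (J b))) :=
        Finset.sum_congr rfl fun J _ => e1 J
    _ = ∑ τ : Equiv.Perm (Fin (p+1)), ∑ J : Fin (p+1) → Fin n, ∑ ρ : Equiv.Perm (Fin (p+1)),
          (((Equiv.Perm.sign τ : ℤ) : ℂ) * ((Equiv.Perm.sign ρ : ℤ) : ℂ)) *
            ∏ b, (x (τ b) (J b) * (starRingEnd ℂ) (x (ρ b) (J b))) := Finset.sum_comm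
    _ = ∑ τ : Equiv.Perm (Fin (p+1)), ∑ ρ : Equiv.Perm (Fin (p+1)), ∑ J : Fin (p+1) → Fin n,
          (((Equiv.Perm.sign τ : ℤ) : ℂ) * ((Equiv.Perm.sign ρ : ℤ) : ℂ)) *
            ∏ b, (x (τ b) (J b) * (starRingEnd ℂ) (x (ρ b) (J b))) :=
        Finset.sum_congr rfl fun τ _ => Finset.sum_comm
    _ = ∑ τ : Equiv.Perm (Fin (p+1)), ∑ ρ : Equiv.Perm (Fin (p+1)),
          (((Equiv.Perm.sign τ : ℤ) : ℂ) * ((Equiv.Perm.sign ρ : ℤ) : ℂ)) *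
            (if τ = ρ then 1 else 0) := by
        refine Finset.sum_congr rfl fun τ _ => Finset.sum_congr rfl fun ρ _ => ?_
        rw [← Finset.mul_sum,
          sum_prod_swap (fun b j => x (τ b) j * (starRingEnd ℂ) (x (ρ b) j))]
        congr 1
        rw [Finset.prod_congr rfl fun b _ => hG hle A hA σ₀ (τ b) (ρ b)]
        exact prod_ite_perm τ ρ
    _ = ∑ τ : Equiv.Perm (Fin (p+1)), (1 : ℂ) := by
        refine Finset.sum_congr rfl fun τ _ => ?_
        simp only [mul_ite, mul_one, mul_zero, Finset.sum_ite_eq, Finset.mem_univ, if_true]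
        exact sign_sq τ
    _ = ((p+1).factorial : ℂ) := by
        simp [Finset.card_univ, Fintype.card_perm, Fintype.card_fin]

lemma T_eq :
    ∑ K : Fin p → Fin n, QF A (wS hle A hA σ₀) K
      = (p.factorial : ℂ) * ∑ a : Fin (p+1), ((lam hle A hA σ₀ a : ℝ) : ℂ) := by
  set x := xv hle A hA σ₀ with hxdef
  set w := wS hle A hA σ₀ with hwdef2
  have hwcons : ∀ (j : Fin n) (K : Fin p → Fin n), w (Fin.cons j K)
      = ∑ τ : Equiv.Perm (Fin (p+1)), ((Equiv.Perm.sign τ : ℤ) : ℂ) *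
          (x (τ 0) j * ∏ b : Fin p, x (τ b.succ) (K b)) := by
    intro j K
    rw [hwdef2, wS_det]
    refine Finset.sum_congr rfl fun τ _ => ?_
    rw [Fin.prod_univ_succ]
    simp [Fin.cons_zero, Fin.cons_succ, hxdef]
  -- pointwise expansion
  have e1 : ∀ (K : Fin p → Fin n) (j k : Fin n),
      A j k * w (Fin.cons j K) * (starRingEnd ℂ) (w (Fin.cons k K))
        = ∑ τ : Equiv.Perm (Fin (p+1)), ∑ ρ : Equiv.Perm (Fin (p+1)),
            (((Equiv.Perm.sign τ : ℤ) : ℂ) * ((Equiv.Perm.sign ρ : ℤ) : ℂ)) *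
              (A j k * x (τ 0) j * (starRingEnd ℂ) (x (ρ 0) k)) *
              ∏ b : Fin p, (x (τ b.succ) (K b) * (starRingEnd ℂ) (x (ρ b.succ) (K b))) := by
    intro K j k
    rw [hwcons j K, hwcons k K, map_sum, mul_assoc, Finset.sum_mul_sum, Finset.mul_sum]
    refine Finset.sum_congr rfl fun τ _ => ?_
    rw [Finset.mul_sum]
    refine Finset.sum_congr rfl fun ρ _ => ?_
    rw [_root_.map_mul, _root_.map_mul, map_prod, conj_sign,
      Finset.prod_mul_distrib]
    ring
  -- sum over j k for fixed K τ ρ, with constants extracted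
  have e2 : ∀ (K : Fin p → Fin n),
      QF A w K = ∑ τ : Equiv.Perm (Fin (p+1)), ∑ ρ : Equiv.Perm (Fin (p+1)),
          (((Equiv.Perm.sign τ : ℤ) : ℂ) * ((Equiv.Perm.sign ρ : ℤ) : ℂ)) *
            (∑ j, ∑ k, A j k * x (τ 0) j * (starRingEnd ℂ) (x (ρ 0) k)) *
            ∏ b : Fin p, (x (τ b.succ) (K b) * (starRingEnd ℂ) (x (ρ b.succ) (K b))) := by
    intro K
    unfold QF
    calc ∑ j, ∑ k, A j k * w (Fin.cons j K) * (starRingEnd ℂ) (w (Fin.cons k K))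
        = ∑ j, ∑ k, ∑ τ : Equiv.Perm (Fin (p+1)), ∑ ρ : Equiv.Perm (Fin (p+1)),
            (((Equiv.Perm.sign τ : ℤ) : ℂ) * ((Equiv.Perm.sign ρ : ℤ) : ℂ)) *
              (A j k * x (τ 0) j * (starRingEnd ℂ) (x (ρ 0) k)) *
              ∏ b : Fin p, (x (τ b.succ) (K b) * (starRingEnd ℂ) (x (ρ b.succ) (K b))) :=
          Finset.sum_congr rfl fun j _ => Finset.sum_congr rfl fun k _ => e1 K j k
      _ = ∑ τ : Equiv.Perm (Fin (p+1)), ∑ ρ : Equiv.Perm (Fin (p+1)), ∑ j, ∑ k,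
            (((Equiv.Perm.sign τ : ℤ) : ℂ) * ((Equiv.Perm.sign ρ : ℤ) : ℂ)) *
              (A j k * x (τ 0) j * (starRingEnd ℂ) (x (ρ 0) k)) *
              ∏ b : Fin p, (x (τ b.succ) (K b) * (starRingEnd ℂ) (x (ρ b.succ) (K b))) :=
          swap4 _
      _ = ∑ τ : Equiv.Perm (Fin (p+1)), ∑ ρ : Equiv.Perm (Fin (p+1)),
            (((Equiv.Perm.sign τ : ℤ) : ℂ) * ((Equiv.Perm.sign ρ : ℤ) : ℂ)) *
              (∑ j, ∑ k, A j k * x (τ 0) j * (starRingEnd ℂ) (x (ρ 0) k)) *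
              ∏ b : Fin p, (x (τ b.succ) (K b) * (starRingEnd ℂ) (x (ρ b.succ) (K b))) := by
          refine Finset.sum_congr rfl fun τ _ => Finset.sum_congr rfl fun ρ _ => ?_
          have key : ∀ (C P : ℂ) (g : Fin n → Fin n → ℂ),
              ∑ j, ∑ k, C * g j k * P = C * (∑ j, ∑ k, g j k) * P := by
            intro C P g
            simp only [Finset.mul_sum, Finset.sum_mul]
          exact key _ _ _
  -- the head factor
  have hHH : ∀ a c : Fin (p+1),
      (∑ j, ∑ k, A j k * x a j * (starRingEnd ℂ) (x c k))
        = ((lam hle A hA σ₀ a : ℝ) : ℂ) * (if a = c then 1 else 0) := by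
    intro a c
    calc ∑ j, ∑ k, A j k * x a j * (starRingEnd ℂ) (x c k)
        = ∑ k, ∑ j, A j k * x a j * (starRingEnd ℂ) (x c k) := Finset.sum_comm
      _ = ∑ k, (∑ j, A j k * x a j) * (starRingEnd ℂ) (x c k) := by
          refine Finset.sum_congr rfl fun k _ => ?_
          rw [Finset.sum_mul]
      _ = ∑ k, ((lam hle A hA σ₀ a : ℝ) : ℂ) * (x a k * (starRingEnd ℂ) (x c k)) := by
          refine Finset.sum_congr rfl fun k _ => ?_
          rw [hH hle A hA σ₀ a k]
          ring
      _ = ((lam hle A hA σ₀ a : ℝ) : ℂ) * (if a = c then 1 else 0) := by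
          rw [← Finset.mul_sum, hG hle A hA σ₀ a c]
  calc ∑ K : Fin p → Fin n, QF A w K
      = ∑ K : Fin p → Fin n, ∑ τ : Equiv.Perm (Fin (p+1)), ∑ ρ : Equiv.Perm (Fin (p+1)),
          (((Equiv.Perm.sign τ : ℤ) : ℂ) * ((Equiv.Perm.sign ρ : ℤ) : ℂ)) *
            (∑ j, ∑ k, A j k * x (τ 0) j * (starRingEnd ℂ) (x (ρ 0) k)) *
            ∏ b : Fin p, (x (τ b.succ) (K b) * (starRingEnd ℂ) (x (ρ b.succ) (K b))) :=
        Finset.sum_congr rfl fun K _ => e2 K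
    _ = ∑ τ : Equiv.Perm (Fin (p+1)), ∑ ρ : Equiv.Perm (Fin (p+1)), ∑ K : Fin p → Fin n,
          (((Equiv.Perm.sign τ : ℤ) : ℂ) * ((Equiv.Perm.sign ρ : ℤ) : ℂ)) *
            (∑ j, ∑ k, A j k * x (τ 0) j * (starRingEnd ℂ) (x (ρ 0) k)) *
            ∏ b : Fin p, (x (τ b.succ) (K b) * (starRingEnd ℂ) (x (ρ b.succ) (K b))) := by
        rw [Finset.sum_comm]
        exact Finset.sum_congr rfl fun τ _ => Finset.sum_comm
    _ = ∑ τ : Equiv.Perm (Fin (p+1)), ∑ ρ : Equiv.Perm (Fin (p+1)),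
          (((Equiv.Perm.sign τ : ℤ) : ℂ) * ((Equiv.Perm.sign ρ : ℤ) : ℂ)) *
            (((lam hle A hA σ₀ (τ 0) : ℝ) : ℂ) * (if τ 0 = ρ 0 then 1 else 0)) *
            ∏ b : Fin p, (if τ b.succ = ρ b.succ then (1:ℂ) else 0) := by
        refine Finset.sum_congr rfl fun τ _ => Finset.sum_congr rfl fun ρ _ => ?_
        rw [← Finset.mul_sum,
          sum_prod_swap (fun b m => x (τ b.succ) m * (starRingEnd ℂ) (x (ρ b.succ) m)),
          hHH]
        congr 1
        exact Finset.prod_congr rfl fun b _ => hG hle A hA σ₀ (τ b.succ) (ρ b.succ)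
    _ = ∑ τ : Equiv.Perm (Fin (p+1)), ∑ ρ : Equiv.Perm (Fin (p+1)),
          (((Equiv.Perm.sign τ : ℤ) : ℂ) * ((Equiv.Perm.sign ρ : ℤ) : ℂ)) *
            ((lam hle A hA σ₀ (τ 0) : ℝ) : ℂ) * (if τ = ρ then 1 else 0) := by
        refine Finset.sum_congr rfl fun τ _ => Finset.sum_congr rfl fun ρ _ => ?_
        rw [← prod_ite_perm τ ρ, Fin.prod_univ_succ]
        ring
    _ = ∑ τ : Equiv.Perm (Fin (p+1)), ((lam hle A hA σ₀ (τ 0) : ℝ) : ℂ) := by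
        refine Finset.sum_congr rfl fun τ _ => ?_
        simp only [mul_ite, mul_one, mul_zero, Finset.sum_ite_eq, Finset.mem_univ, if_true]
        rw [show (((Equiv.Perm.sign τ : ℤ) : ℂ) * ((Equiv.Perm.sign τ : ℤ) : ℂ)) *
            ((lam hle A hA σ₀ (τ 0) : ℝ) : ℂ)
          = (((Equiv.Perm.sign τ : ℤ) : ℂ) * ((Equiv.Perm.sign τ : ℤ) : ℂ)) *
            ((lam hle A hA σ₀ (τ 0) : ℝ) : ℂ) from rfl]
        rw [sign_sq τ, one_mul]
    _ = ∑ y : Fin (p+1) × Equiv.Perm (Fin p),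
          ((lam hle A hA σ₀ ((Equiv.Perm.decomposeFin.symm y) 0) : ℝ) : ℂ) :=
        (Equiv.Perm.decomposeFin.symm.sum_comp
          (fun τ : Equiv.Perm (Fin (p+1)) => ((lam hle A hA σ₀ (τ 0) : ℝ) : ℂ))).symm
    _ = ∑ y : Fin (p+1) × Equiv.Perm (Fin p), ((lam hle A hA σ₀ y.1 : ℝ) : ℂ) := by
        refine Finset.sum_congr rfl fun y _ => ?_
        rw [show (Equiv.Perm.decomposeFin.symm y) 0 = y.1 from
          Equiv.Perm.decomposeFin_symm_apply_zero y.1 y.2]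
    _ = (p.factorial : ℂ) * ∑ a : Fin (p+1), ((lam hle A hA σ₀ a : ℝ) : ℂ) := by
        rw [Fintype.sum_prod_type]
        simp [Finset.sum_const, Finset.card_univ, Fintype.card_perm, Fintype.card_fin,
          Finset.mul_sum]

end setup

section main
variable {n p : ℕ}

lemma part1 (hn : p + 2 ≤ n) (A : Matrix (Fin n) (Fin n) ℂ)
    (hA : A.IsHermitian) (M : ℝ) (hM : 0 < M)
    (μ : Fin n → ℝ) (hmono : Monotone μ) (σ₀ : Equiv.Perm (Fin n))
    (hμ : μ = hA.eigenvalues ∘ σ₀)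
    [DecidablePred (fun J : Fin p → Fin n => StrictMono J)]
    [DecidablePred (fun J : Fin (p+1) → Fin n => StrictMono J)]
    (h : ∀ w : (Fin (p + 1) → Fin n) → ℂ, IsAntisymmArray w →
      M * ∑ J ∈ univ.filter (fun J : Fin (p + 1) → Fin n => StrictMono J), normSq (w J) ≤
        (∑ K ∈ univ.filter (fun K : Fin p → Fin n => StrictMono K), QF A w K).re) :
    0 < μ ⟨p, Nat.lt_of_lt_of_le (Nat.lt_succ_self p) (Nat.le_of_succ_le hn)⟩ := by
  have hle : p + 1 ≤ n := by omega
  set w := wS hle A hA σ₀ with hw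
  have hwa : IsAntisymmArray w := wS_antisymm hle A hA σ₀
  have hS1 : ∑ J ∈ univ.filter (fun J : Fin (p+1) → Fin n => StrictMono J),
      normSq (w J) = 1 := by
    have hall : ∑ J : Fin (p+1) → Fin n, normSq (w J) = ((p+1).factorial : ℝ) := by
      have hS := S_eq hle A hA σ₀
      have hcast : ((∑ J : Fin (p+1) → Fin n, normSq (w J) : ℝ) : ℂ)
          = ∑ J : Fin (p+1) → Fin n, w J * (starRingEnd ℂ) (w J) := by
        push_cast
        exact Finset.sum_congr rfl fun J _ => (Complex.mul_conj (w J)).symm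
      have := hcast.trans hS
      exact_mod_cast this
    have hsmul := sum_eq_factorial_smul (fun J : Fin (p+1) → Fin n => normSq (w J))
      (fun J σ => normSq_antisymm hwa J σ)
      (fun J hJ => by show normSq (w J) = 0; rw [antisymm_zero hwa hJ]; simp)
    rw [hall, nsmul_eq_mul] at hsmul
    have hne : ((p+1).factorial : ℝ) ≠ 0 := by positivity
    have h1 : ((p+1).factorial : ℝ) * 1 = ((p+1).factorial : ℝ) *
        (∑ J ∈ univ.filter (fun J : Fin (p+1) → Fin n => StrictMono J), normSq (w J)) := by
      rw [mul_one]; exact hsmul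
    exact (mul_left_cancel₀ hne h1).symm
  have hT : (∑ K ∈ univ.filter (fun K : Fin p → Fin n => StrictMono K), QF A w K)
      = ∑ a : Fin (p+1), ((lam hle A hA σ₀ a : ℝ) : ℂ) := by
    have hsmul := sum_eq_factorial_smul (fun K : Fin p → Fin n => QF A w K)
      (fun K σ => QF_comp A hwa K σ) (fun K hK => QF_zero A hwa hK)
    rw [T_eq hle A hA σ₀, nsmul_eq_mul] at hsmul
    have hne : ((p).factorial : ℂ) ≠ 0 := Nat.cast_ne_zero.mpr (Nat.factorial_ne_zero p)
    exact (mul_left_cancel₀ hne hsmul).symm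
  have happ := h w hwa
  rw [hS1, hT] at happ
  have hre : (∑ a : Fin (p+1), ((lam hle A hA σ₀ a : ℝ) : ℂ)).re
      = ∑ a : Fin (p+1), lam hle A hA σ₀ a := by
    rw [Complex.re_sum]
    exact Finset.sum_congr rfl fun a _ => Complex.ofReal_re _
  rw [hre] at happ
  have hlam_le : ∀ a : Fin (p+1), lam hle A hA σ₀ a ≤ μ ⟨p, by omega⟩ := by
    intro a
    have hla : lam hle A hA σ₀ a = μ (Fin.castLE hle a) := by rw [hμ]; rfl
    rw [hla]
    refine hmono ?_
    rw [Fin.le_def]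
    simpa using Nat.lt_succ_iff.mp a.is_lt
  have hsum_le : ∑ a : Fin (p+1), lam hle A hA σ₀ a ≤ ((p:ℝ)+1) * μ ⟨p, by omega⟩ := by
    calc ∑ a : Fin (p+1), lam hle A hA σ₀ a
        ≤ ∑ _a : Fin (p+1), μ ⟨p, by omega⟩ := Finset.sum_le_sum fun a _ => hlam_le a
      _ = ((p:ℝ)+1) * μ ⟨p, by omega⟩ := by
          rw [Finset.sum_const, Finset.card_univ, Fintype.card_fin, nsmul_eq_mul]
          push_cast; ring
  have hp1 : (0:ℝ) < (p:ℝ) + 1 := by positivity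
  nlinarith [hM, happ, hsum_le, hp1]

end main
end Stmt14Aux

open Classical in
theorem stmt14 {n p : ℕ} (hn : p + 2 ≤ n) (A : Matrix (Fin n) (Fin n) ℂ)
    (hA : A.IsHermitian) (M : ℝ) (hM : 0 < M)
    (μ : Fin n → ℝ) (hmono : Monotone μ)
    (hperm : ∃ σ : Equiv.Perm (Fin n), μ = hA.eigenvalues ∘ σ)
    (h : ∀ w : (Fin (p + 1) → Fin n) → ℂ, IsAntisymmArray w →
      M * ∑ J ∈ univ.filter (fun J : Fin (p + 1) → Fin n => StrictMono J), normSq (w J) ≤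
        (∑ K ∈ univ.filter (fun K : Fin p → Fin n => StrictMono K),
          ∑ j, ∑ k, A j k * w (Fin.cons j K) * (starRingEnd ℂ) (w (Fin.cons k K))).re) :
    0 < μ ⟨p, by omega⟩ ∧
    (∀ w : (Fin (p + 2) → Fin n) → ℂ, IsAntisymmArray w →
      M * ∑ J ∈ univ.filter (fun J : Fin (p + 2) → Fin n => StrictMono J), normSq (w J) ≤
        (∑ K ∈ univ.filter (fun K : Fin (p + 1) → Fin n => StrictMono K),
          ∑ j, ∑ k, A j k * w (Fin.cons j K) * (starRingEnd ℂ) (w (Fin.cons k K))).re) := by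
  obtain ⟨σ₀, hμ⟩ := hperm
  have h' : ∀ w : (Fin (p + 1) → Fin n) → ℂ, IsAntisymmArray w →
      M * ∑ J ∈ univ.filter (fun J : Fin (p + 1) → Fin n => StrictMono J), normSq (w J) ≤
        (∑ K ∈ univ.filter (fun K : Fin p → Fin n => StrictMono K), Stmt14Aux.QF A w K).re := by
    intro w hw
    have := h w hw
    simpa [Stmt14Aux.QF] using this
  constructor
  · exact Stmt14Aux.part1 hn A hA M hM μ hmono σ₀ hμ h'
  · intro w hw
    have := Stmt14Aux.part2 A M hM h' w hw
    simpa [Stmt14Aux.QF] using this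
end
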